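/- arXiv:math/0607606 — 5 statements merged into one kernel-verified Lean document; each statement's English description precedes it below -/
import Mathlib

section
/- For |q| < 1 and z ≠ 0, Σ_{n ∈ ℤ} q^{2n² + n} ( z^{2n+1} + z^{-2n} ) = ∏_{n≥1} (1 + z q^{n-1})(1 + z^{-1} q^n)(1 - q^n). -/
/-!
STATEMENT 2 (the `a = 2` case of Theorem 1, a form of Jacobi's triple product):
For `|q| < 1` and `z ≠ 0`,
`∑_{n ∈ ℤ} q^{2n²+n} (z^{2n+1} + z^{-2n}) = ∏_{n≥1} (1 + z q^{n-1})(1 + z^{-1} q^n)(1 - q^n)`.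
-/

noncomputable section

namespace JTP
open Finset Filter Topology

def tt (m : ℤ) : ℤ := m * (m - 1) / 2

lemma tt_mul_two (m : ℤ) : tt m * 2 = m * (m - 1) := by
  apply Int.ediv_mul_cancel
  have h : Even ((m - 1) * (m - 1 + 1)) := Int.even_mul_succ_self (m - 1)
  have h2 : (m - 1) * (m - 1 + 1) = m * (m - 1) := by ring
  rw [h2] at h
  exact h.two_dvd

lemma tt_eq (a b : ℤ) (h : a * 2 = b * 2) : a = b := by omega

lemma tt_add_one (k : ℤ) : tt (k + 1) = tt k + k := by
  apply tt_eq
  have h1 := tt_mul_two (k + 1)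
  have h2 := tt_mul_two k
  linear_combination h1 - h2

lemma tt_sub (k : ℤ) (N : ℤ) : tt (k - N) = tt k + tt (N + 1) - N * k := by
  apply tt_eq
  have h1 := tt_mul_two (k - N)
  have h2 := tt_mul_two k
  have h3 := tt_mul_two (N + 1)
  linear_combination h1 - h2 - h3

lemma tt_odd (n : ℤ) : tt (2 * n + 1) = 2 * n ^ 2 + n := by
  apply tt_eq
  have h1 := tt_mul_two (2 * n + 1)
  linear_combination h1

lemma tt_even (n : ℤ) : tt (-(2 * n)) = 2 * n ^ 2 + n := by
  apply tt_eq
  have h1 := tt_mul_two (-(2 * n))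
  linear_combination h1

def EE (q : ℂ) (n : ℕ) : ℂ := ∏ j ∈ range n, (1 - q ^ (j + 1))

def gb (q : ℂ) (n : ℕ) (k : ℤ) : ℂ :=
  if 0 ≤ k ∧ k ≤ (n : ℤ) then EE q n / (EE q k.toNat * EE q ((n : ℤ) - k).toNat) else 0

def w (z q : ℂ) (m : ℤ) : ℂ := q ^ tt m * z ^ m

lemma EE_zero (q : ℂ) : EE q 0 = 1 := by simp [EE]

lemma EE_succ (q : ℂ) (n : ℕ) : EE q (n + 1) = EE q n * (1 - q ^ (n + 1)) :=
  prod_range_succ _ _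


def Qq (q : ℂ) : ℂ := ∏' n : ℕ, (1 - q ^ (n + 1))

section withvars
variable {z q : ℂ} (hz : z ≠ 0) (hq : ‖q‖ < 1) (hq0 : q ≠ 0)

include hq in
lemma one_sub_pow_ne (j : ℕ) : (1 : ℂ) - q ^ (j + 1) ≠ 0 := by
  intro h
  have h1 : (1 : ℂ) = q ^ (j + 1) := by linear_combination h
  have h2 : ‖q ^ (j + 1)‖ < 1 := by
    rw [norm_pow]
    exact pow_lt_one₀ (norm_nonneg q) hq (Nat.succ_ne_zero j)
  rw [← h1] at h2
  simp at h2

include hq in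
lemma EE_ne (n : ℕ) : EE q n ≠ 0 := by
  rw [EE, Finset.prod_ne_zero_iff]
  exact fun j _ => one_sub_pow_ne hq j

include hq in
lemma pascal (n : ℕ) (k : ℤ) :
    gb q (n + 1) k = gb q n k + q ^ ((n : ℤ) + 1 - k) * gb q n (k - 1) := by
  rcases lt_or_ge k 0 with hk | hk
  · rw [gb, if_neg (by omega), gb, if_neg (by omega), gb, if_neg (by omega)]
    ring
  lift k to ℕ using hk with a
  rcases Nat.eq_zero_or_pos a with rfl | ha
  · rw [gb, if_pos (by omega), gb, if_pos (by omega), gb, if_neg (by omega)]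
    have e1 : ((↑(n + 1) : ℤ) - ↑(0:ℕ)).toNat = n + 1 := by omega
    have e2 : ((↑n : ℤ) - ↑(0:ℕ)).toNat = n := by omega
    have e3 : ((0:ℕ) : ℤ).toNat = 0 := by omega
    rw [e1, e2, e3, EE_zero]
    rw [one_mul, one_mul, div_self (EE_ne hq _), div_self (EE_ne hq _)]
    ring
  rcases lt_or_ge ((n : ℤ) + 1) a with hgt | hle
  · rw [gb, if_neg (by omega), gb, if_neg (by omega), gb, if_neg (by omega)]
    ring
  rcases eq_or_lt_of_le hle with heq | hlt
  · -- a = n + 1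
    rw [gb, if_pos (by omega), gb, if_neg (by omega), gb, if_pos (by omega)]
    have e1 : ((a:ℤ)).toNat = n + 1 := by omega
    have e2 : ((↑(n+1) : ℤ) - a).toNat = 0 := by omega
    have e3 : ((a:ℤ) - 1).toNat = n := by omega
    have e4 : ((n:ℤ) - ((a:ℤ) - 1)).toNat = 0 := by omega
    have e5 : (n : ℤ) + 1 - (a:ℤ) = 0 := by omega
    rw [e1, e2, e3, e4, e5, EE_zero, zpow_zero, mul_one, mul_one,
      div_self (EE_ne hq _), div_self (EE_ne hq _)]
    ring
  · -- 1 ≤ a ≤ n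
    obtain ⟨c, rfl⟩ : ∃ c, a = c + 1 := ⟨a - 1, by omega⟩
    obtain ⟨b, hb⟩ : ∃ b, n = c + 1 + b := ⟨n - (c+1), by omega⟩
    subst hb
    rw [gb, if_pos (by omega), gb, if_pos (by omega), gb, if_pos (by omega)]
    have e1 : (((c+1:ℕ):ℤ)).toNat = c + 1 := by omega
    have e2 : ((↑(c+1+b+1) : ℤ) - ((c+1:ℕ):ℤ)).toNat = b + 1 := by omega
    have e3 : ((↑(c+1+b) : ℤ) - ((c+1:ℕ):ℤ)).toNat = b := by omega
    have e4 : (((c+1:ℕ):ℤ) - 1).toNat = c := by omega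
    have e5 : ((↑(c+1+b):ℤ) - (((c+1:ℕ):ℤ) - 1)).toNat = b + 1 := by omega
    have e6 : ((c+1+b : ℕ):ℤ) + 1 - ((c+1:ℕ):ℤ) = ((b+1 : ℕ) : ℤ) := by omega
    rw [e1, e2, e3, e4, e5, e6, zpow_natCast]
    have hEc1 : EE q (c+1) = EE q c * (1 - q ^ (c+1)) := EE_succ q c
    have hEb1 : EE q (b+1) = EE q b * (1 - q ^ (b+1)) := EE_succ q b
    have hEn1 : EE q (c+1+b+1) = EE q (c+1+b) * (1 - q ^ (c+1+b+1)) := EE_succ q _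
    rw [hEc1, hEb1, hEn1]
    have hpow : q ^ (c+1+b+1) = q ^ (c+1) * q ^ (b+1) := by rw [← pow_add]; congr 1
    rw [hpow]
    have h1 := EE_ne hq (q := q) c
    have h2 := EE_ne hq (q := q) b
    have h3 := EE_ne hq (q := q) (c+1+b)
    have h4 := one_sub_pow_ne hq c
    have h5 := one_sub_pow_ne hq b
    field_simp
    try ring

include hq hq0 in
lemma qbin (n : ℕ) (t : ℂ) :
    ∏ j ∈ range n, (1 + t * q ^ j) = ∑ k ∈ range (n + 1), gb q n (k : ℤ) * q ^ tt (k : ℤ) * t ^ k := by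
  induction n with
  | zero => simp [gb, EE_zero, tt]
  | succ n ih =>
    rw [prod_range_succ, ih]
    have hR : ∑ k ∈ range (n + 2), gb q (n + 1) (k : ℤ) * q ^ tt (k : ℤ) * t ^ k
        = (∑ k ∈ range (n + 2), gb q n (k : ℤ) * q ^ tt (k : ℤ) * t ^ k)
          + ∑ k ∈ range (n + 2), q ^ ((n : ℤ) + 1 - (k : ℤ)) * gb q n ((k : ℤ) - 1) * q ^ tt (k : ℤ) * t ^ k := by
      rw [← sum_add_distrib]
      refine sum_congr rfl fun k _ => ?_
      rw [pascal hq n (k : ℤ)]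
      ring
    rw [hR, mul_add, mul_one]
    congr 1
    · conv_rhs => rw [sum_range_succ]
      have h1 : gb q n ((n + 1 : ℕ) : ℤ) = 0 := by
        rw [gb, if_neg (by push_cast; omega)]
      rw [h1]
      simp
    · conv_rhs => rw [Finset.sum_range_succ']
      rw [sum_mul]
      have h0 : q ^ ((n : ℤ) + 1 - ((0 : ℕ) : ℤ)) * gb q n (((0 : ℕ) : ℤ) - 1) * q ^ tt ((0 : ℕ) : ℤ) * t ^ (0 : ℕ) = 0 := by
        rw [gb, if_neg (by omega)]
        ring
      rw [h0, add_zero]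
      refine (sum_congr rfl fun k hk => ?_).symm
      have hc : ((k + 1 : ℕ) : ℤ) = (k : ℤ) + 1 := by push_cast; ring
      rw [hc, tt_add_one]
      have he1 : (q : ℂ) ^ ((n : ℤ) + 1 - ((k : ℤ) + 1)) * q ^ (tt (k : ℤ) + (k : ℤ)) = q ^ (tt (k : ℤ) + (n : ℤ)) := by
        rw [← zpow_add₀ hq0]
        congr 1
        ring
      have he2 : (q : ℂ) ^ (tt (k : ℤ) + (n : ℤ)) = q ^ tt (k : ℤ) * q ^ n := by
        rw [zpow_add₀ hq0, zpow_natCast]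
      calc q ^ ((n : ℤ) + 1 - ((k : ℤ) + 1)) * gb q n (((k : ℤ) + 1) - 1) * q ^ (tt (k : ℤ) + (k : ℤ)) * t ^ (k + 1)
          = (q ^ ((n : ℤ) + 1 - ((k : ℤ) + 1)) * q ^ (tt (k : ℤ) + (k : ℤ))) * gb q n (k : ℤ) * t ^ (k + 1) := by
            rw [add_sub_cancel_right]; ring
        _ = gb q n (k : ℤ) * q ^ tt (k : ℤ) * t ^ k * (t * q ^ n) := by
            rw [he1, he2, pow_succ]; ring

lemma sum_range_tt (N : ℕ) : ∑ j ∈ range N, (j : ℤ) = tt (N : ℤ) := by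
  induction N with
  | zero => simp [tt]
  | succ n ih => rw [sum_range_succ, ih, Nat.cast_add, Nat.cast_one, tt_add_one]

include hz hq hq0 in
lemma finJTP (N : ℕ) :
    ∏ j ∈ range N, ((1 + z * q ^ j) * (1 + z⁻¹ * q ^ (j + 1)))
      = ∑ k ∈ range (2 * N + 1), gb q (2 * N) (k : ℤ) * w z q ((k : ℤ) - N) := by
  have hqN : (q : ℂ) ^ N ≠ 0 := pow_ne_zero _ hq0
  rw [two_mul]
  have h2 := qbin hq hq0 (N + N) (z * (q ^ N)⁻¹)
  rw [prod_range_add] at h2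
  -- second factor
  have hB : ∏ j ∈ range N, (1 + z * (q ^ N)⁻¹ * q ^ (N + j)) = ∏ j ∈ range N, (1 + z * q ^ j) := by
    refine prod_congr rfl fun j _ => ?_
    rw [pow_add]
    field_simp
  -- first factor
  have hA : ∏ j ∈ range N, (1 + z * (q ^ N)⁻¹ * q ^ j)
      = (∏ j ∈ range N, (z * (q ^ N)⁻¹ * q ^ j)) * ∏ j ∈ range N, (1 + z⁻¹ * q ^ (N - j)) := by
    rw [← prod_mul_distrib]
    refine prod_congr rfl fun j hj => ?_
    have hjN : j < N := mem_range.mp hj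
    have hp : (q : ℂ) ^ j * q ^ (N - j) = q ^ N := by rw [← pow_add]; congr 1; omega
    have : z * (q ^ N)⁻¹ * q ^ j * (1 + z⁻¹ * q ^ (N - j))
        = z * (q ^ N)⁻¹ * q ^ j + (z * z⁻¹) * ((q ^ N)⁻¹ * (q ^ j * q ^ (N - j))) := by ring
    rw [this, hp, mul_inv_cancel₀ hz, inv_mul_cancel₀ hqN]
    ring
  -- the constant
  have hC : ∏ j ∈ range N, (z * (q ^ N)⁻¹ * q ^ j) = z ^ N * (q ^ tt ((N : ℤ) + 1))⁻¹ := by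
    rw [prod_mul_distrib, prod_mul_distrib, prod_const, prod_const, card_range,
      prod_pow_eq_pow_sum, inv_pow, ← pow_mul]
    have hNN : tt ((N : ℤ)) + tt ((N : ℤ) + 1) = (N : ℤ) * N := by
      apply tt_eq
      have h1 := tt_mul_two ((N : ℤ))
      have h2 := tt_mul_two ((N : ℤ) + 1)
      linear_combination h1 + h2
    have hcast : ((∑ i ∈ range N, i : ℕ) : ℤ) = tt (N : ℤ) := by
      rw [← sum_range_tt]
      exact Nat.cast_sum _ _
    have h3 : ((q : ℂ) ^ (N * N))⁻¹ * q ^ (∑ i ∈ range N, i) = (q ^ tt ((N : ℤ) + 1))⁻¹ := by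
      rw [← zpow_natCast q (N * N), ← zpow_natCast q (∑ i ∈ range N, i), hcast,
        ← zpow_neg, ← zpow_neg, ← zpow_add₀ hq0]
      congr 1
      push_cast
      linarith [hNN]
    rw [mul_assoc, h3]
  -- reflect
  have hRef : ∏ j ∈ range N, (1 + z⁻¹ * q ^ (N - j)) = ∏ j ∈ range N, (1 + z⁻¹ * q ^ (j + 1)) := by
    rw [← prod_range_reflect (fun j => 1 + z⁻¹ * q ^ (j + 1)) N]
    refine prod_congr rfl fun j hj => ?_
    have hjN : j < N := mem_range.mp hj
    have : N - 1 - j + 1 = N - j := by omega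
    rw [this]
  rw [hA, hB, hC, hRef] at h2
  -- h2 : z^N * (q^tt(N+1))⁻¹ * P₂ * P₁ = Σ
  have hCne : (z : ℂ) ^ N * ((q : ℂ) ^ tt ((N : ℤ) + 1))⁻¹ ≠ 0 :=
    mul_ne_zero (pow_ne_zero _ hz) (inv_ne_zero (zpow_ne_zero _ hq0))
  rw [prod_mul_distrib]
  have key : (∏ j ∈ range N, (1 + z * q ^ j)) * ∏ j ∈ range N, (1 + z⁻¹ * q ^ (j + 1))
      = (z ^ N * (q ^ tt ((N : ℤ) + 1))⁻¹)⁻¹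
        * ∑ k ∈ range (N + N + 1), gb q (N + N) (k : ℤ) * q ^ tt (k : ℤ) * (z * (q ^ N)⁻¹) ^ k := by
    rw [eq_inv_mul_iff_mul_eq₀ hCne, ← h2]
    ring
  rw [key, mul_sum]
  refine sum_congr rfl fun k hk => ?_
  -- per-term identity
  have e1 : ((z : ℂ) * (q ^ N)⁻¹) ^ k = z ^ k * (q ^ (N * k))⁻¹ := by
    rw [mul_pow, inv_pow, ← pow_mul]
  have e2 : (q : ℂ) ^ tt ((k : ℤ) - (N : ℤ)) = q ^ tt (k : ℤ) * q ^ tt ((N : ℤ) + 1) * (q ^ (N * k))⁻¹ := by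
    rw [tt_sub]
    rw [show tt (k : ℤ) + tt ((N : ℤ) + 1) - (N : ℤ) * (k : ℤ)
        = tt (k : ℤ) + tt ((N : ℤ) + 1) + (-((N * k : ℕ) : ℤ)) from by push_cast; ring]
    rw [zpow_add₀ hq0, zpow_add₀ hq0, zpow_neg, zpow_natCast]
  have e3 : (z : ℂ) ^ ((k : ℤ) - (N : ℤ)) = z ^ k * (z ^ N)⁻¹ := by
    rw [zpow_sub₀ hz, div_eq_mul_inv, zpow_natCast, zpow_natCast]
  rw [w, e1, e2, e3, mul_inv, inv_inv]
  ring

/-- geometric tail bound -/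
lemma sum_pow_le (N : ℕ) (hq : ‖q‖ < 1) :
    ∑ j ∈ range N, ‖q‖ ^ (j + 1) ≤ (1 - ‖q‖)⁻¹ := by
  have hs : Summable (fun j : ℕ => ‖q‖ ^ j) := summable_geometric_of_lt_one (norm_nonneg q) hq
  calc ∑ j ∈ range N, ‖q‖ ^ (j + 1) ≤ ∑ j ∈ range N, ‖q‖ ^ j := by
        refine sum_le_sum fun j _ => ?_
        exact pow_le_pow_of_le_one (norm_nonneg q) hq.le (by omega)
    _ ≤ ∑' j : ℕ, ‖q‖ ^ j := Summable.sum_le_tsum _ (fun j _ => by positivity) hs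
    _ = (1 - ‖q‖)⁻¹ := tsum_geometric_of_lt_one (norm_nonneg q) hq

include hq in
lemma EE_norm_le (n : ℕ) : ‖EE q n‖ ≤ Real.exp (1 - ‖q‖)⁻¹ := by
  rw [EE]
  calc ‖∏ j ∈ range n, (1 - q ^ (j + 1))‖ = ∏ j ∈ range n, ‖(1 : ℂ) - q ^ (j + 1)‖ :=
        norm_prod _ _
    _ ≤ ∏ j ∈ range n, Real.exp (‖q‖ ^ (j + 1)) := by
        refine prod_le_prod (fun j _ => norm_nonneg _) fun j _ => ?_
        calc ‖(1 : ℂ) - q ^ (j + 1)‖ ≤ ‖(1 : ℂ)‖ + ‖q ^ (j + 1)‖ := norm_sub_le _ _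
          _ = 1 + ‖q‖ ^ (j + 1) := by rw [norm_one, norm_pow]
          _ ≤ Real.exp (‖q‖ ^ (j + 1)) := by
              have := Real.add_one_le_exp (‖q‖ ^ (j + 1))
              linarith
    _ = Real.exp (∑ j ∈ range n, ‖q‖ ^ (j + 1)) := by rw [Real.exp_sum]
    _ ≤ Real.exp (1 - ‖q‖)⁻¹ := Real.exp_le_exp.mpr (sum_pow_le n hq)

include hq in
lemma EE_norm_ge (n : ℕ) :
    Real.exp (-((1 - ‖q‖)⁻¹ * (1 - ‖q‖)⁻¹)) ≤ ‖EE q n‖ := by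
  set r := ‖q‖ with hr
  have hr0 : 0 ≤ r := norm_nonneg q
  have hr1 : (0 : ℝ) < 1 - r := by linarith
  set T := (1 - r)⁻¹ with hT
  have hT0 : 0 < T := by positivity
  have hTr : T * (1 - r) = 1 := inv_mul_cancel₀ (ne_of_gt hr1)
  have hfac : ∀ j : ℕ, 0 < 1 - r ^ (j + 1) := by
    intro j
    have h1 : r ^ (j + 1) ≤ r ^ 1 := pow_le_pow_of_le_one hr0 (by linarith) (by omega)
    rw [pow_one] at h1
    have : r ^ (j+1) < 1 := lt_of_le_of_lt h1 (by linarith)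
    linarith
  have step1 : ∏ j ∈ range n, (1 - r ^ (j + 1)) ≤ ‖EE q n‖ := by
    rw [EE, norm_prod]
    refine prod_le_prod (fun j _ => (hfac j).le) fun j _ => ?_
    have h := norm_sub_norm_le (1 : ℂ) (q ^ (j + 1))
    rw [norm_one, norm_pow] at h
    exact h
  refine le_trans ?_ step1
  -- lower bound on real product
  have hinv : ∏ j ∈ range n, (1 - r ^ (j + 1))⁻¹ ≤ Real.exp (T * T) := by
    calc ∏ j ∈ range n, (1 - r ^ (j + 1))⁻¹ ≤ ∏ j ∈ range n, Real.exp (T * r ^ (j + 1)) := by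
          refine prod_le_prod (fun j _ => inv_nonneg.2 (hfac j).le) fun j _ => ?_
          have hx0 : 0 ≤ r ^ (j + 1) := by positivity
          have hxr : r ^ (j + 1) ≤ r := by
            have h1 : r ^ (j + 1) ≤ r ^ 1 := pow_le_pow_of_le_one hr0 (by linarith) (by omega)
            rwa [pow_one] at h1
          have h1 : (1 - r ^ (j + 1))⁻¹ ≤ 1 + T * r ^ (j + 1) := by
            rw [inv_le_iff_one_le_mul₀ (hfac j)]
            have h3 : T * r ^ (j + 1) ≤ T * r := mul_le_mul_of_nonneg_left hxr hT0.le
            have hTr' : T - T * r = 1 := by linear_combination hTr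
            have h4 : 0 ≤ T - T * r ^ (j + 1) - 1 := by linarith
            nlinarith [mul_nonneg hx0 h4]
          refine h1.trans ?_
          have := Real.add_one_le_exp (T * r ^ (j + 1))
          linarith
      _ = Real.exp (T * ∑ j ∈ range n, r ^ (j + 1)) := by
          rw [← Real.exp_sum, mul_sum]
      _ ≤ Real.exp (T * T) := by
          refine Real.exp_le_exp.mpr ?_
          exact mul_le_mul_of_nonneg_left (sum_pow_le n hq) hT0.le
  have hprodpos : 0 < ∏ j ∈ range n, (1 - r ^ (j + 1)) := prod_pos fun j _ => hfac j
  rw [prod_inv_distrib] at hinv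
  have h1 : 1 ≤ (∏ j ∈ range n, (1 - r ^ (j + 1))) * Real.exp (T * T) := by
    have h2 := mul_le_mul_of_nonneg_left hinv hprodpos.le
    rwa [mul_inv_cancel₀ (ne_of_gt hprodpos)] at h2
  rw [Real.exp_neg, inv_le_iff_one_le_mul₀ (Real.exp_pos _)]
  exact h1

include hq in
lemma multipliable_one_add (c : ℂ) : Multipliable (fun n : ℕ => 1 + c * q ^ n) := by
  by_cases hc : ∀ n : ℕ, 1 + c * q ^ n ≠ 0
  · refine Complex.multipliable_of_summable_log (f := fun n => 1 + c * q ^ n) ?_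
    have h0 : Tendsto (fun n : ℕ => ‖c‖ * ‖q‖ ^ n) atTop (𝓝 (‖c‖ * 0)) :=
      (tendsto_pow_atTop_nhds_zero_of_lt_one (norm_nonneg q) hq).const_mul ‖c‖
    rw [mul_zero] at h0
    have hev : ∀ᶠ n : ℕ in atTop, ‖c * q ^ n‖ ≤ 1 / 2 := by
      filter_upwards [h0.eventually_le_const (by norm_num : (0:ℝ) < 1/2)] with n hn
      rw [norm_mul, norm_pow]
      exact hn
    refine Summable.of_norm_bounded_eventually_nat (g := fun n => 3 / 2 * (‖c‖ * ‖q‖ ^ n)) ?_ ?_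
    · exact ((summable_geometric_of_lt_one (norm_nonneg q) hq).mul_left ‖c‖).mul_left _
    · filter_upwards [hev] with n hn
      have := Complex.norm_log_one_add_half_le_self hn
      rwa [norm_mul, norm_pow] at this
  · push_neg at hc
    obtain ⟨n0, hn0⟩ := hc
    refine ⟨0, ?_⟩
    rw [HasProd]
    refine Tendsto.congr' ?_ tendsto_const_nhds
    filter_upwards [eventually_ge_atTop ({n0} : Finset ℕ)] with s hs
    exact (Finset.prod_eq_zero (Finset.singleton_subset_iff.mp hs) hn0).symm

include hq in
lemma multipliable_one_sub_pow : Multipliable (fun n : ℕ => 1 - q ^ (n + 1)) := by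
  have h := multipliable_one_add hq (-q)
  refine h.congr fun n => ?_
  rw [pow_succ]
  ring

include hq in
lemma tendsto_EE : Tendsto (EE q) atTop (𝓝 (Qq q)) :=
  (multipliable_one_sub_pow hq).hasProd.tendsto_prod_nat

include hq in
lemma Q_norm_ge : Real.exp (-((1 - ‖q‖)⁻¹ * (1 - ‖q‖)⁻¹)) ≤ ‖Qq q‖ :=
  ge_of_tendsto' (tendsto_EE hq).norm fun n => EE_norm_ge hq n

include hq in
lemma Q_ne : Qq q ≠ 0 := by
  have := Q_norm_ge hq
  have h2 := Real.exp_pos (-((1 - ‖q‖)⁻¹ * (1 - ‖q‖)⁻¹))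
  intro h
  rw [h, norm_zero] at this
  linarith

lemma tt_neg_succ (n : ℤ) : tt (-(n + 1)) = tt (-n) + (n + 1) := by
  apply tt_eq
  have h1 := tt_mul_two (-(n + 1))
  have h2 := tt_mul_two (-n)
  linear_combination h1 - h2

include hz hq0 in
lemma w_succ (n : ℤ) : w z q (n + 1) = (q ^ n * z) * w z q n := by
  rw [w, w, tt_add_one, zpow_add₀ hq0, zpow_add_one₀ hz]
  ring

include hz hq0 in
lemma w_negsucc (n : ℤ) : w z q (-(n + 1)) = (q ^ (n + 1) * z⁻¹) * w z q (-n) := by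
  rw [w, w, tt_neg_succ, zpow_add₀ hq0]
  have : (z : ℂ) ^ (-(n + 1)) = z ^ (-n) * z⁻¹ := by
    rw [show -(n + 1) = -n + (-1) from by ring, zpow_add₀ hz, zpow_neg_one]
  rw [this]
  ring

include hz hq hq0 in
lemma summable_norm_w : Summable (fun m : ℤ => ‖w z q m‖) := by
  have geom : ∀ c : ℝ, 0 ≤ c → ∀ᶠ n : ℕ in atTop, c * ‖q‖ ^ n ≤ 1 / 2 := by
    intro c hc
    have h0 : Tendsto (fun n : ℕ => c * ‖q‖ ^ n) atTop (𝓝 (c * 0)) :=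
      (tendsto_pow_atTop_nhds_zero_of_lt_one (norm_nonneg q) hq).const_mul c
    rw [mul_zero] at h0
    exact h0.eventually_le_const (by norm_num : (0:ℝ) < 1/2)
  apply Summable.of_nat_of_neg
  · apply summable_of_ratio_norm_eventually_le (r := 1/2) (by norm_num)
    have hev := geom ‖z‖ (norm_nonneg z)
    filter_upwards [hev] with n hn
    have hw : w z q ((n : ℤ) + 1) = (q ^ (n : ℤ) * z) * w z q (n : ℤ) := w_succ hz hq0 _
    rw [Real.norm_of_nonneg (norm_nonneg _), Real.norm_of_nonneg (norm_nonneg _)]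
    have hc : ((n + 1 : ℕ) : ℤ) = (n : ℤ) + 1 := by push_cast; ring
    rw [hc, hw, norm_mul, norm_mul, norm_zpow, zpow_natCast ‖q‖ n]
    calc ‖q‖ ^ n * ‖z‖ * ‖w z q (n : ℤ)‖ = (‖z‖ * ‖q‖ ^ n) * ‖w z q (n : ℤ)‖ := by ring
      _ ≤ 1 / 2 * ‖w z q (n : ℤ)‖ := mul_le_mul_of_nonneg_right hn (norm_nonneg _)
  · apply summable_of_ratio_norm_eventually_le (r := 1/2) (by norm_num)
    have hev' : ∀ᶠ n : ℕ in atTop, ‖z⁻¹‖ * ‖q‖ ^ (n + 1) ≤ 1 / 2 := by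
      filter_upwards [geom ‖z⁻¹‖ (norm_nonneg _)] with n hn
      have : ‖z⁻¹‖ * ‖q‖ ^ (n + 1) ≤ ‖z⁻¹‖ * ‖q‖ ^ n := by
        have := pow_le_pow_of_le_one (norm_nonneg q) hq.le (Nat.le_succ n)
        exact mul_le_mul_of_nonneg_left this (norm_nonneg _)
      linarith
    filter_upwards [hev'] with n hn
    have hw : w z q (-((n : ℤ) + 1)) = (q ^ ((n : ℤ) + 1) * z⁻¹) * w z q (-(n : ℤ)) :=
      w_negsucc hz hq0 _
    rw [Real.norm_of_nonneg (norm_nonneg _), Real.norm_of_nonneg (norm_nonneg _)]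
    have hc : (-((n + 1 : ℕ) : ℤ)) = -((n : ℤ) + 1) := by push_cast; ring
    rw [hc, hw, norm_mul, norm_mul]
    have hq' : ‖(q : ℂ) ^ ((n : ℤ) + 1)‖ = ‖q‖ ^ (n + 1) := by
      rw [show ((n : ℤ) + 1) = ((n + 1 : ℕ) : ℤ) from by push_cast; ring, zpow_natCast, norm_pow]
    rw [hq']
    calc ‖q‖ ^ (n + 1) * ‖z⁻¹‖ * ‖w z q (-(n : ℤ))‖
        ≤ 1 / 2 * ‖w z q (-(n : ℤ))‖ := by
          refine mul_le_mul_of_nonneg_right ?_ (norm_nonneg _)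
          linarith [hn]
      _ = 1 / 2 * ‖w z q (-(n : ℤ))‖ := rfl

theorem main_ne (hz : z ≠ 0) (hq : ‖q‖ < 1) (hq0 : q ≠ 0) :
    ∑' m : ℤ, w z q m
      = ∏' n : ℕ, ((1 + z * q ^ n) * (1 + z⁻¹ * q ^ (n + 1)) * (1 - q ^ (n + 1))) := by
  set g : ℕ → ℂ := fun n => (1 + z * q ^ n) * (1 + z⁻¹ * q ^ (n + 1)) * (1 - q ^ (n + 1)) with hg
  -- multipliability of the triple product
  have m1 : Multipliable (fun n : ℕ => 1 + z * q ^ n) := multipliable_one_add hq z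
  have m2 : Multipliable (fun n : ℕ => 1 + z⁻¹ * q ^ (n + 1)) := by
    refine (multipliable_one_add hq (z⁻¹ * q)).congr fun n => ?_
    rw [pow_succ]
    ring
  have m3 : Multipliable (fun n : ℕ => 1 - q ^ (n + 1)) := multipliable_one_sub_pow hq
  have hmul : Multipliable g := ⟨_, (m1.hasProd.mul m2.hasProd).mul m3.hasProd⟩
  have hpartial : Tendsto (fun N => ∏ j ∈ range N, g j) atTop (𝓝 (∏' n, g n)) :=
    hmul.hasProd.tendsto_prod_nat
  -- Tannery setup
  set f : ℕ → ℤ → ℂ := fun N m => EE q N * gb q (2 * N) (m + N) * w z q m with hf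
  set T : ℝ := (1 - ‖q‖)⁻¹ with hT
  set Cb : ℝ := Real.exp T with hCb
  set dd : ℝ := Real.exp (-(T * T)) with hdd
  have hdd0 : 0 < dd := Real.exp_pos _
  have hCb0 : 0 < Cb := Real.exp_pos _
  set C : ℝ := Cb * Cb / (dd * dd) with hC
  have hC0 : 0 ≤ C := by positivity
  have h_bound : ∀ N : ℕ, ∀ m : ℤ, ‖f N m‖ ≤ C * ‖w z q m‖ := by
    intro N m
    rw [hf]
    simp only []
    rw [norm_mul]
    refine mul_le_mul_of_nonneg_right ?_ (norm_nonneg _)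
    rw [norm_mul, gb]
    split_ifs with h
    · rw [norm_div, norm_mul]
      have h1 : ‖EE q N‖ * (‖EE q (2 * N)‖ / (‖EE q (m + N).toNat‖ * ‖EE q (((2 * N : ℕ) : ℤ) - (m + N)).toNat‖))
          ≤ Cb * (Cb / (dd * dd)) := by
        refine mul_le_mul (EE_norm_le hq N) ?_ (by positivity) hCb0.le
        refine div_le_div₀ hCb0.le (EE_norm_le hq _) (by positivity) ?_
        exact mul_le_mul (EE_norm_ge hq _) (EE_norm_ge hq _) hdd0.le (norm_nonneg _)
      calc ‖EE q N‖ * (‖EE q (2 * N)‖ / (‖EE q (m + N).toNat‖ * ‖EE q (((2 * N : ℕ) : ℤ) - (m + N)).toNat‖))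
          ≤ Cb * (Cb / (dd * dd)) := h1
        _ = C := by rw [hC]; ring
    · rw [norm_zero, mul_zero]
      exact hC0
  have h_sum : Summable (fun m : ℤ => C * ‖w z q m‖) :=
    (summable_norm_w hz hq hq0).mul_left C
  have hQQ : Qq q * Qq q ≠ 0 := mul_ne_zero (Q_ne hq) (Q_ne hq)
  have hab : ∀ m : ℤ, Tendsto (fun N => f N m) atTop (𝓝 (w z q m)) := by
    intro m
    have t1 : Tendsto (fun N : ℕ => ((m + (N : ℤ)).toNat)) atTop atTop :=
      tendsto_atTop_atTop.2 fun b => ⟨b + m.natAbs, fun a ha => by omega⟩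
    have t2 : Tendsto (fun N : ℕ => (((N : ℤ)) - m).toNat) atTop atTop :=
      tendsto_atTop_atTop.2 fun b => ⟨b + m.natAbs, fun a ha => by omega⟩
    have t3 : Tendsto (fun N : ℕ => 2 * N) atTop atTop :=
      tendsto_atTop_atTop.2 fun b => ⟨b, fun a ha => by omega⟩
    have hEE := tendsto_EE hq
    have main : Tendsto
        (fun N : ℕ => EE q N * EE q (2 * N) / (EE q ((m + (N : ℤ)).toNat) * EE q (((N : ℤ) - m).toNat)) * w z q m)
        atTop (𝓝 (Qq q * Qq q / (Qq q * Qq q) * w z q m)) :=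
      (((hEE.mul (hEE.comp t3)).div ((hEE.comp t1).mul (hEE.comp t2)) hQQ).mul_const _)
    rw [div_self hQQ, one_mul] at main
    refine Tendsto.congr' ?_ main
    filter_upwards [eventually_ge_atTop m.natAbs] with N hN
    rw [hf]
    simp only []
    rw [gb, if_pos (by constructor <;> omega)]
    have e1 : ((2 * N : ℕ) : ℤ) - (m + (N : ℤ)) = (N : ℤ) - m := by push_cast; ring
    rw [e1]
    ring
  have htan : Tendsto (fun N => ∑' m : ℤ, f N m) atTop (𝓝 (∑' m : ℤ, w z q m)) :=
    tendsto_tsum_of_dominated_convergence h_sum hab (Eventually.of_forall h_bound)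
  -- finite sums equal partial products
  have heq : ∀ N : ℕ, ∑' m : ℤ, f N m = ∏ j ∈ range N, g j := by
    intro N
    have hinj : Function.Injective (fun k : ℕ => (k : ℤ) - N) := by
      intro a b hab2
      simpa using hab2
    have hsupp : Function.support (f N) ⊆ Set.range (fun k : ℕ => (k : ℤ) - N) := by
      intro m hm
      rcases le_or_gt (-(N : ℤ)) m with h | h
      · refine ⟨(m + N).toNat, ?_⟩
        show ((m + (N : ℤ)).toNat : ℤ) - N = m
        omega
      · exfalso
        apply hm
        rw [hf]
        simp only []
        rw [gb, if_neg (by omega)]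
        ring
    have step1 : ∑' m : ℤ, f N m = ∑' k : ℕ, f N ((k : ℤ) - N) :=
      (Function.Injective.tsum_eq hinj hsupp).symm
    have step2 : ∑' k : ℕ, f N ((k : ℤ) - N) = ∑ k ∈ range (2 * N + 1), f N ((k : ℤ) - N) := by
      refine tsum_eq_sum fun k hk => ?_
      have hk' : 2 * N + 1 ≤ k := by simpa using hk
      rw [hf]
      simp only []
      rw [gb, if_neg (by omega)]
      ring
    have step3 : ∑ k ∈ range (2 * N + 1), f N ((k : ℤ) - N)
        = EE q N * ∑ k ∈ range (2 * N + 1), gb q (2 * N) (k : ℤ) * w z q ((k : ℤ) - N) := by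
      rw [mul_sum]
      refine sum_congr rfl fun k hk => ?_
      rw [hf]
      simp only []
      rw [show ((k : ℤ) - N + N) = (k : ℤ) from by ring]
      ring
    rw [step1, step2, step3, ← finJTP hz hq hq0 N, EE, ← prod_mul_distrib]
    refine prod_congr rfl fun j _ => ?_
    rw [hg]
    ring
  have htan2 : Tendsto (fun N => ∏ j ∈ range N, g j) atTop (𝓝 (∑' m : ℤ, w z q m)) :=
    htan.congr heq
  exact tendsto_nhds_unique htan2 hpartial

theorem lhs_eq (hz : z ≠ 0) (hq : ‖q‖ < 1) (hq0 : q ≠ 0) :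
    ∑' n : ℤ, q ^ (2 * n ^ 2 + n) * (z ^ (2 * n + 1) + z ^ (-2 * n)) = ∑' m : ℤ, w z q m := by
  have hsn := summable_norm_w hz hq hq0
  have hsum : Summable (w z q) := hsn.of_norm
  have inj1 : Function.Injective (fun n : ℤ => 2 * n + 1) := fun a b h => by
    have h2 : 2 * a + 1 = 2 * b + 1 := h
    omega
  have inj2 : Function.Injective (fun n : ℤ => -2 * n) := fun a b h => by
    have h2 : -2 * a = -2 * b := h
    omega
  have h1 : Summable (fun n : ℤ => w z q (2 * n + 1)) := hsum.comp_injective inj1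
  have h2 : Summable (fun n : ℤ => w z q (-2 * n)) := hsum.comp_injective inj2
  have hso : Summable (fun m : ℤ => if Odd m then w z q m else 0) := by
    refine Summable.of_norm_bounded hsn fun m => ?_
    by_cases h : Odd m <;> simp [h]
  have hse : Summable (fun m : ℤ => if Odd m then 0 else w z q m) := by
    refine Summable.of_norm_bounded hsn fun m => ?_
    by_cases h : Odd m <;> simp [h]
  have hsplit : ∑' m : ℤ, w z q m
      = (∑' m : ℤ, if Odd m then w z q m else 0) + ∑' m : ℤ, if Odd m then 0 else w z q m := by
    rw [← Summable.tsum_add hso hse]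
    refine tsum_congr fun m => ?_
    by_cases h : Odd m <;> simp [h]
  have hodd : (∑' m : ℤ, if Odd m then w z q m else 0) = ∑' n : ℤ, w z q (2 * n + 1) := by
    rw [← Function.Injective.tsum_eq (g := fun n : ℤ => 2 * n + 1) inj1
      (f := fun m : ℤ => if Odd m then w z q m else 0) ?_]
    · refine tsum_congr fun n => ?_
      have ho : Odd (2 * n + 1) := ⟨n, by ring⟩
      simp [ho]
    · intro m hm
      have hOdd : Odd m := by
        by_contra hcon
        apply hm
        simp [hcon]
      obtain ⟨c, hc⟩ := hOdd
      refine ⟨c, ?_⟩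
      show 2 * c + 1 = m
      omega
  have heven : (∑' m : ℤ, if Odd m then 0 else w z q m) = ∑' n : ℤ, w z q (-2 * n) := by
    rw [← Function.Injective.tsum_eq (g := fun n : ℤ => -2 * n) inj2
      (f := fun m : ℤ => if Odd m then 0 else w z q m) ?_]
    · refine tsum_congr fun n => ?_
      have he : ¬ Odd (-2 * n : ℤ) := by
        rw [Int.not_odd_iff_even]
        exact ⟨-n, by ring⟩
      simp [he]
    · intro m hm
      have hEv : ¬ Odd m := by
        by_contra hcon
        apply hm
        simp [hcon]
      rw [Int.not_odd_iff_even] at hEv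
      obtain ⟨c, hc⟩ := hEv
      refine ⟨-c, ?_⟩
      show -2 * (-c) = m
      omega
  calc ∑' n : ℤ, q ^ (2 * n ^ 2 + n) * (z ^ (2 * n + 1) + z ^ (-2 * n))
      = ∑' n : ℤ, (w z q (2 * n + 1) + w z q (-2 * n)) := by
        refine tsum_congr fun n => ?_
        have hte : tt (-2 * n) = 2 * n ^ 2 + n := by
          rw [show (-2 * n : ℤ) = -(2 * n) from by ring]
          exact tt_even n
        rw [w, w, tt_odd, hte]
        ring
    _ = (∑' n : ℤ, w z q (2 * n + 1)) + ∑' n : ℤ, w z q (-2 * n) := Summable.tsum_add h1 h2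
    _ = ∑' m : ℤ, w z q m := by rw [← hodd, ← heven, ← hsplit]

end withvars
end JTP

theorem case_a_eq_two (z q : ℂ) (hz : z ≠ 0) (hq : ‖q‖ < 1) :
    ∑' n : ℤ, q ^ (2 * n ^ 2 + n) * (z ^ (2 * n + 1) + z ^ (-2 * n)) =
      ∏' n : ℕ, ((1 + z * q ^ n) * (1 + z⁻¹ * q ^ (n + 1)) * (1 - q ^ (n + 1))) := by
  by_cases hq0 : q = 0
  · subst hq0
    have hL : ∀ n : ℤ, n ≠ 0 → (0 : ℂ) ^ (2 * n ^ 2 + n) * (z ^ (2 * n + 1) + z ^ (-2 * n)) = 0 := by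
      intro n hn
      have hne : 2 * n ^ 2 + n ≠ 0 := by
        have hfac : 2 * n ^ 2 + n = n * (2 * n + 1) := by ring
        rw [hfac]
        intro hcon
        rcases mul_eq_zero.mp hcon with h | h <;> omega
      rw [zero_zpow _ hne, zero_mul]
    have hR : ∀ n : ℕ, n ≠ 0 →
        ((1 + z * (0:ℂ) ^ n) * (1 + z⁻¹ * (0:ℂ) ^ (n + 1)) * (1 - (0:ℂ) ^ (n + 1))) = 1 := by
      intro n hn
      rw [zero_pow hn, zero_pow (Nat.succ_ne_zero n)]
      ring
    rw [tsum_eq_single (0 : ℤ) hL, tprod_eq_mulSingle (0 : ℕ) hR]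
    norm_num
    ring
  · rw [JTP.lhs_eq hz hq hq0, JTP.main_ne hz hq hq0]
end
end

section
/- Let a ≥ 2 be an integer and define C_a(z;q) := Σ_{n ∈ ℤ^a, n·1_a = 0} q^{(a/2) n·n + b_a·n} ( z^{a n_1 + 1} + z^{a n_2 + 2} + ⋯ + z^{a n_{a-1} + a-1} + z^{-a n_{a-1}} ). Then for |q| < 1 and z ≠ 0, C_a(zq; q) = z^{-(a-1)} C_a(z; q). -/
/-!
STATEMENT 6 (equation (2.16) of the paper):
Let `a ≥ 2` and let `C_a(z;q)` be the multidimensional theta function of Theorem 1.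
Then for `|q| < 1` (with `q ≠ 0`, as `q = exp(2πiτ)` throughout the paper) and `z ≠ 0`,
`C_a(zq;q) = z^{-(a-1)} C_a(z;q)`.
Vectors `n ∈ ℤ^a` are encoded as functions `ℕ → ℤ` vanishing from index `a` on.
-/

noncomputable section

/-- `Q_a(n) = (a/2) n·n + b_a·n`. -/
def quadQ (a : ℕ) (v : ℕ → ℤ) : ℤ :=
  ((a : ℤ) * ∑ i ∈ Finset.range a, v i ^ 2) / 2 + ∑ i ∈ Finset.range a, (i : ℤ) * v i

/-- The multidimensional theta function `C_a(z;q)`. -/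
def bigC (a : ℕ) (z q : ℂ) : ℂ :=
  ∑' v : {w : ℕ → ℤ // (∀ i, a ≤ i → w i = 0) ∧ ∑ i ∈ Finset.range a, w i = 0},
    q ^ quadQ a v.1 *
      ((∑ j ∈ Finset.Ico 1 a, z ^ ((a : ℤ) * v.1 j + (j : ℤ))) +
        z ^ (-(a : ℤ) * v.1 (a - 1)))

namespace BigCAux

open Finset

abbrev V (a : ℕ) := {w : ℕ → ℤ // (∀ i, a ≤ i → w i = 0) ∧ ∑ i ∈ Finset.range a, w i = 0}

def expE (a t : ℕ) (w : ℕ → ℤ) : ℤ :=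
  if t = 0 then -(a : ℤ) * w (a - 1) else (a : ℤ) * w t + (t : ℤ)

def gterm (a t : ℕ) (z q : ℂ) (v : V a) : ℂ :=
  q ^ quadQ a v.1 * z ^ expE a t v.1

section cyc
variable {M : Type*} [AddCommMonoid M]

lemma sum_cycle (m : ℕ) (f : ℕ → M) :
    ∑ i ∈ range (m + 1), f ((i + 1) % (m + 1)) = ∑ i ∈ range (m + 1), f i := by
  rw [Finset.sum_range_succ]
  have h1 : ∑ i ∈ range m, f ((i + 1) % (m + 1)) = ∑ i ∈ range m, f (i + 1) :=
    Finset.sum_congr rfl fun i hi => by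
      rw [Nat.mod_eq_of_lt (by simp only [mem_range] at hi; omega)]
  rw [h1, Nat.mod_self]
  exact (Finset.sum_range_succ' f m).symm

lemma sum_cycle' (m : ℕ) (f : ℕ → M) :
    ∑ i ∈ range (m + 1), f ((i + m) % (m + 1)) = ∑ i ∈ range (m + 1), f i := by
  rw [Finset.sum_range_succ' (fun i => f ((i + m) % (m + 1))) m]
  have h1 : ∑ i ∈ range m, f ((i + 1 + m) % (m + 1)) = ∑ i ∈ range m, f i :=
    Finset.sum_congr rfl fun i hi => by
      have h2 : i + 1 + m = i + (m + 1) := by omega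
      rw [h2, Nat.add_mod_right, Nat.mod_eq_of_lt (by simp only [mem_range] at hi; omega)]
  have h3 : (0 + m) % (m + 1) = m := by
    rw [Nat.zero_add, Nat.mod_eq_of_lt (by omega)]
  rw [h1, h3, ← Finset.sum_range_succ]

lemma sum_cycle_a {a : ℕ} (ha : 1 ≤ a) (f : ℕ → M) :
    ∑ i ∈ range a, f ((i + 1) % a) = ∑ i ∈ range a, f i := by
  obtain ⟨m, rfl⟩ : ∃ m, a = m + 1 := ⟨a - 1, by omega⟩
  exact sum_cycle m f

lemma sum_cycle'_a {a : ℕ} (ha : 1 ≤ a) (f : ℕ → M) :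
    ∑ i ∈ range a, f ((i + (a - 1)) % a) = ∑ i ∈ range a, f i := by
  obtain ⟨m, rfl⟩ : ∃ m, a = m + 1 := ⟨a - 1, by omega⟩
  simpa using sum_cycle' m f

end cyc

variable {a : ℕ}

def rhoFun (a : ℕ) (w : ℕ → ℤ) : ℕ → ℤ := fun i => if i < a then -w (a - 1 - i) else 0
def sigFun (a : ℕ) (w : ℕ → ℤ) : ℕ → ℤ := fun i => if i < a then w ((i + 1) % a) else 0
def sigFun' (a : ℕ) (w : ℕ → ℤ) : ℕ → ℤ := fun i => if i < a then w ((i + (a - 1)) % a) else 0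
def tauFun (r s : ℕ) (w : ℕ → ℤ) : ℕ → ℤ :=
  fun i => w i + (if i = r then 1 else 0) - (if i = s then 1 else 0)

end BigCAux

section p2
namespace BigCAux
open Finset
variable {a : ℕ}

lemma rhoFun_rhoFun (ha : 1 ≤ a) (w : ℕ → ℤ) (hw : ∀ i, a ≤ i → w i = 0) :
    rhoFun a (rhoFun a w) = w := by
  funext i
  by_cases hi : i < a
  · have h1 : a - 1 - i < a := by omega
    have h2 : a - 1 - (a - 1 - i) = i := by omega
    simp only [rhoFun, if_pos hi, if_pos h1, h2, neg_neg]
  · simp only [rhoFun, if_neg hi]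
    exact (hw i (by omega)).symm

def rho (a : ℕ) (ha : 1 ≤ a) : V a ≃ V a where
  toFun v := ⟨rhoFun a v.1, fun i hi => if_neg (by omega), by
    simp only [rhoFun]
    rw [Finset.sum_congr rfl (fun i hi => if_pos (mem_range.mp hi))]
    rw [Finset.sum_range_reflect (fun j => -v.1 j) a]
    simp [v.2.2]⟩
  invFun v := ⟨rhoFun a v.1, fun i hi => if_neg (by omega), by
    simp only [rhoFun]
    rw [Finset.sum_congr rfl (fun i hi => if_pos (mem_range.mp hi))]
    rw [Finset.sum_range_reflect (fun j => -v.1 j) a]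
    simp [v.2.2]⟩
  left_inv v := Subtype.ext (rhoFun_rhoFun ha v.1 v.2.1)
  right_inv v := Subtype.ext (rhoFun_rhoFun ha v.1 v.2.1)

lemma sigFun'_sigFun (ha : 1 ≤ a) (w : ℕ → ℤ) (hw : ∀ i, a ≤ i → w i = 0) :
    sigFun' a (sigFun a w) = w := by
  funext i
  by_cases hi : i < a
  · have h1 : (i + (a - 1)) % a < a := Nat.mod_lt _ (by omega)
    simp only [sigFun', sigFun, if_pos hi, if_pos h1, Nat.mod_add_mod]
    have h2 : i + (a - 1) + 1 = i + a := by omega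
    rw [h2, Nat.add_mod_right, Nat.mod_eq_of_lt hi]
  · simp only [sigFun', if_neg hi]
    exact (hw i (by omega)).symm

lemma sigFun_sigFun' (ha : 1 ≤ a) (w : ℕ → ℤ) (hw : ∀ i, a ≤ i → w i = 0) :
    sigFun a (sigFun' a w) = w := by
  funext i
  by_cases hi : i < a
  · have h1 : (i + 1) % a < a := Nat.mod_lt _ (by omega)
    simp only [sigFun, sigFun', if_pos hi, if_pos h1, Nat.mod_add_mod]
    have h2 : i + 1 + (a - 1) = i + a := by omega
    rw [h2, Nat.add_mod_right, Nat.mod_eq_of_lt hi]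
  · simp only [sigFun, if_neg hi]
    exact (hw i (by omega)).symm

def sig (a : ℕ) (ha : 1 ≤ a) : V a ≃ V a where
  toFun v := ⟨sigFun a v.1, fun i hi => if_neg (by omega), by
    simp only [sigFun]
    rw [Finset.sum_congr rfl (fun i hi => if_pos (mem_range.mp hi))]
    rw [sum_cycle_a ha v.1, v.2.2]⟩
  invFun v := ⟨sigFun' a v.1, fun i hi => if_neg (by omega), by
    simp only [sigFun']
    rw [Finset.sum_congr rfl (fun i hi => if_pos (mem_range.mp hi))]
    rw [sum_cycle'_a ha v.1, v.2.2]⟩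
  left_inv v := Subtype.ext (sigFun'_sigFun ha v.1 v.2.1)
  right_inv v := Subtype.ext (sigFun_sigFun' ha v.1 v.2.1)

def tauEquiv (a r s : ℕ) (hr : r < a) (hs : s < a) : V a ≃ V a where
  toFun v := ⟨tauFun r s v.1, fun i hi => by
      simp only [tauFun, if_neg (by omega : ¬ i = r), if_neg (by omega : ¬ i = s),
        v.2.1 i hi]; ring, by
    simp only [tauFun]
    rw [Finset.sum_sub_distrib, Finset.sum_add_distrib, v.2.2,
      Finset.sum_ite_eq' (range a) r (fun _ => (1:ℤ)),
      Finset.sum_ite_eq' (range a) s (fun _ => (1:ℤ)),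
      if_pos (mem_range.mpr hr), if_pos (mem_range.mpr hs)]
    ring⟩
  invFun v := ⟨tauFun s r v.1, fun i hi => by
      simp only [tauFun, if_neg (by omega : ¬ i = r), if_neg (by omega : ¬ i = s),
        v.2.1 i hi]; ring, by
    simp only [tauFun]
    rw [Finset.sum_sub_distrib, Finset.sum_add_distrib, v.2.2,
      Finset.sum_ite_eq' (range a) r (fun _ => (1:ℤ)),
      Finset.sum_ite_eq' (range a) s (fun _ => (1:ℤ)),
      if_pos (mem_range.mpr hr), if_pos (mem_range.mpr hs)]
    ring⟩
  left_inv v := Subtype.ext (by funext i; simp only [tauFun]; ring)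
  right_inv v := Subtype.ext (by funext i; simp only [tauFun]; ring)

end BigCAux
end p2

section p3
namespace BigCAux
open Finset
variable {a : ℕ}

lemma quadQ_rho (ha : 1 ≤ a) (w : ℕ → ℤ) (hsum : ∑ i ∈ range a, w i = 0) :
    quadQ a (rhoFun a w) = quadQ a w := by
  unfold quadQ
  have hsq : ∑ i ∈ range a, (rhoFun a w) i ^ 2 = ∑ i ∈ range a, w i ^ 2 := by
    simp only [rhoFun]
    rw [Finset.sum_congr rfl (fun i hi => by rw [if_pos (mem_range.mp hi)])]
    calc ∑ i ∈ range a, (-w (a - 1 - i)) ^ 2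
        = ∑ i ∈ range a, (fun j => w j ^ 2) (a - 1 - i) := by
          exact Finset.sum_congr rfl fun i _ => by ring
      _ = ∑ i ∈ range a, w i ^ 2 := Finset.sum_range_reflect (fun j => w j ^ 2) a
  have hlin : ∑ i ∈ range a, (i : ℤ) * (rhoFun a w) i = ∑ i ∈ range a, (i : ℤ) * w i := by
    simp only [rhoFun]
    rw [Finset.sum_congr rfl (fun i hi => by rw [if_pos (mem_range.mp hi)])]
    rw [← Finset.sum_range_reflect (fun j => (j : ℤ) * -w (a - 1 - j)) a]
    have h1 : ∑ i ∈ range a, ((a - 1 - i : ℕ) : ℤ) * -w (a - 1 - (a - 1 - i))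
        = ∑ i ∈ range a, ((i : ℤ) * w i - ((a : ℤ) - 1) * w i) := by
      refine Finset.sum_congr rfl fun i hi => ?_
      have hi' : i < a := mem_range.mp hi
      have h2 : a - 1 - (a - 1 - i) = i := by omega
      have h3 : ((a - 1 - i : ℕ) : ℤ) = (a : ℤ) - 1 - (i : ℤ) := by
        have : (1:ℕ) + i ≤ a := by omega
        push_cast [Nat.cast_sub (by omega : 1 ≤ a), Nat.cast_sub (by omega : i ≤ a - 1)]
        omega
      rw [h2, h3]; ring
    rw [h1, Finset.sum_sub_distrib, ← Finset.mul_sum, hsum, mul_zero, sub_zero]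
  rw [hsq, hlin]

lemma quadQ_sig (ha : 2 ≤ a) (w : ℕ → ℤ) (hsum : ∑ i ∈ range a, w i = 0) :
    quadQ a (sigFun a w) = quadQ a w + (a : ℤ) * w 0 := by
  unfold quadQ
  have hsq : ∑ i ∈ range a, (sigFun a w) i ^ 2 = ∑ i ∈ range a, w i ^ 2 := by
    simp only [sigFun]
    rw [Finset.sum_congr rfl (fun i hi => by rw [if_pos (mem_range.mp hi)])]
    exact sum_cycle_a (by omega) (fun j => w j ^ 2)
  have hlin : ∑ i ∈ range a, (i : ℤ) * (sigFun a w) i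
      = (∑ i ∈ range a, (i : ℤ) * w i) + (a : ℤ) * w 0 := by
    simp only [sigFun]
    rw [Finset.sum_congr rfl (fun i hi => by rw [if_pos (mem_range.mp hi)])]
    obtain ⟨m, rfl⟩ : ∃ m, a = m + 1 := ⟨a - 1, by omega⟩
    rw [Finset.sum_range_succ (fun i => (i : ℤ) * w ((i + 1) % (m + 1))) m]
    rw [Nat.mod_self]
    have h1 : ∑ i ∈ range m, (i : ℤ) * w ((i + 1) % (m + 1))
        = ∑ i ∈ range m, (i : ℤ) * w (i + 1) := by
      refine Finset.sum_congr rfl fun i hi => ?_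
      rw [Nat.mod_eq_of_lt (by simp only [mem_range] at hi; omega)]
    have h2 : ∑ i ∈ range (m + 1), (i : ℤ) * w i
        = ∑ i ∈ range m, (i : ℤ) * w (i + 1) + ∑ i ∈ range m, w (i + 1) := by
      rw [Finset.sum_range_succ' (fun i => (i : ℤ) * w i) m]
      have e0 : ∀ i ∈ range m, ((i + 1 : ℕ) : ℤ) * w (i + 1) = (i : ℤ) * w (i + 1) + w (i + 1) :=
        fun i _ => by push_cast; ring
      rw [Finset.sum_congr rfl e0, Finset.sum_add_distrib]
      push_cast
      ring
    have h3 : ∑ i ∈ range m, w (i + 1) = - w 0 := by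
      have := Finset.sum_range_succ' w m
      rw [hsum] at this
      linarith
    rw [h1]
    have : ∑ i ∈ range m, (i:ℤ) * w (i + 1) = ∑ i ∈ range (m + 1), (i : ℤ) * w i + w 0 := by
      rw [h2, h3]; ring
    rw [this]
    push_cast
    ring
  rw [hsq, hlin]; ring

lemma quadQ_sig' (ha : 2 ≤ a) (w : ℕ → ℤ) (hw : ∀ i, a ≤ i → w i = 0)
    (hsum : ∑ i ∈ range a, w i = 0) :
    quadQ a (sigFun' a w) = quadQ a w - (a : ℤ) * w (a - 1) := by
  have hsum' : ∑ i ∈ range a, sigFun' a w i = 0 := by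
    simp only [sigFun']
    rw [Finset.sum_congr rfl (fun i hi => by rw [if_pos (mem_range.mp hi)])]
    rw [sum_cycle'_a (by omega) w, hsum]
  have h0 : sigFun' a w 0 = w (a - 1) := by
    simp only [sigFun', if_pos (by omega : 0 < a), Nat.zero_add,
      Nat.mod_eq_of_lt (by omega : a - 1 < a)]
  have := quadQ_sig ha (sigFun' a w) hsum'
  rw [sigFun_sigFun' (by omega) w hw, h0] at this
  linarith

lemma quadQ_tau {r s : ℕ} (hr : r < a) (hs : s < a) (hrs : r ≠ s) (w : ℕ → ℤ) :
    quadQ a (tauFun r s w) = quadQ a w + (a : ℤ) * (w r - w s + 1) + (r : ℤ) - (s : ℤ) := by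
  unfold quadQ
  have hsq : ∑ i ∈ range a, (tauFun r s w) i ^ 2
      = ∑ i ∈ range a, w i ^ 2 + 2 * (w r - w s + 1) := by
    have e1 : ∀ i : ℕ, tauFun r s w i ^ 2 =
        w i ^ 2 + ((if i = r then 2 * w i else 0) - (if i = s then 2 * w i else 0))
          + ((if i = r then (1:ℤ) else 0) + (if i = s then (1:ℤ) else 0)) := by
      intro i
      simp only [tauFun]
      by_cases h1 : i = r <;> by_cases h2 : i = s
      · exact absurd (h1.symm.trans h2) hrs
      all_goals (simp [h1, h2, hrs, Ne.symm hrs]; try ring)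
    rw [Finset.sum_congr rfl (fun i _ => e1 i)]
    rw [Finset.sum_add_distrib, Finset.sum_add_distrib, Finset.sum_sub_distrib,
      Finset.sum_add_distrib,
      Finset.sum_ite_eq' (range a) r (fun j => 2 * w j),
      Finset.sum_ite_eq' (range a) s (fun j => 2 * w j),
      Finset.sum_ite_eq' (range a) r (fun _ => (1:ℤ)),
      Finset.sum_ite_eq' (range a) s (fun _ => (1:ℤ)),
      if_pos (mem_range.mpr hr), if_pos (mem_range.mpr hs),
      if_pos (mem_range.mpr hr), if_pos (mem_range.mpr hs)]
    ring
  have hlin : ∑ i ∈ range a, (i : ℤ) * (tauFun r s w) i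
      = ∑ i ∈ range a, (i : ℤ) * w i + (r : ℤ) - (s : ℤ) := by
    have e1 : ∀ i : ℕ, (i : ℤ) * tauFun r s w i =
        (i : ℤ) * w i + ((if i = r then (i:ℤ) else 0) - (if i = s then (i:ℤ) else 0)) := by
      intro i
      simp only [tauFun]
      by_cases h1 : i = r <;> by_cases h2 : i = s
      · exact absurd (h1.symm.trans h2) hrs
      all_goals (simp [h1, h2, hrs, Ne.symm hrs]; try ring)
    rw [Finset.sum_congr rfl (fun i _ => e1 i)]
    rw [Finset.sum_add_distrib, Finset.sum_sub_distrib,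
      Finset.sum_ite_eq' (range a) r (fun i => (i:ℤ)),
      Finset.sum_ite_eq' (range a) s (fun i => (i:ℤ)),
      if_pos (mem_range.mpr hr), if_pos (mem_range.mpr hs)]
    ring
  rw [hsq, hlin]
  have hdiv : ((a:ℤ) * (∑ i ∈ range a, w i ^ 2 + 2 * (w r - w s + 1))) / 2
      = ((a:ℤ) * ∑ i ∈ range a, w i ^ 2) / 2 + (a:ℤ) * (w r - w s + 1) := by
    have : (a:ℤ) * (∑ i ∈ range a, w i ^ 2 + 2 * (w r - w s + 1))
        = (a:ℤ) * ∑ i ∈ range a, w i ^ 2 + ((a:ℤ) * (w r - w s + 1)) * 2 := by ring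
    rw [this, Int.add_mul_ediv_right _ _ (by norm_num : (2:ℤ) ≠ 0)]
  rw [hdiv]
  ring

end BigCAux
end p3

section p4
namespace BigCAux
open Finset
variable {a : ℕ}

lemma sigFun_apply_lt (w : ℕ → ℤ) {i : ℕ} (hi : i < a - 1) : sigFun a w i = w (i + 1) := by
  simp only [sigFun, if_pos (by omega : i < a)]
  rw [Nat.mod_eq_of_lt (by omega)]

lemma sigFun_apply_last (ha : 1 ≤ a) (w : ℕ → ℤ) : sigFun a w (a - 1) = w 0 := by
  simp only [sigFun, if_pos (by omega : a - 1 < a)]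
  have h : a - 1 + 1 = a := by omega
  rw [h, Nat.mod_self]

lemma sigFun'_apply_zero (ha : 1 ≤ a) (w : ℕ → ℤ) : sigFun' a w 0 = w (a - 1) := by
  simp only [sigFun', if_pos (by omega : 0 < a), Nat.zero_add]
  rw [Nat.mod_eq_of_lt (by omega)]

lemma rhoFun_apply (w : ℕ → ℤ) {i : ℕ} (hi : i < a) : rhoFun a w i = -w (a - 1 - i) := by
  simp only [rhoFun, if_pos hi]

lemma key (ha : 2 ≤ a) {t : ℕ} (ht : t < a) :
    ∃ e : V a ≃ V a, ∀ v : V a,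
      quadQ a (e v).1 = quadQ a v.1 + expE a t v.1 ∧
      expE a ((t + (a - 1)) % a) (e v).1 = expE a t v.1 + ((a : ℤ) - 1) := by
  have ha1 : 1 ≤ a := by omega
  rcases Nat.lt_or_ge t 1 with ht0 | ht1
  · -- t = 0
    have ht0' : t = 0 := by omega
    subst ht0'
    refine ⟨(sig a ha1).symm.trans (rho a ha1), fun v => ?_⟩
    set u : V a := (sig a ha1).symm v with hu
    have hu1 : u.1 = sigFun' a v.1 := rfl
    have happ : (((sig a ha1).symm.trans (rho a ha1)) v).1 = rhoFun a u.1 := rfl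
    have hmod : (0 + (a - 1)) % a = a - 1 := by
      rw [Nat.zero_add, Nat.mod_eq_of_lt (by omega)]
    constructor
    · rw [happ, quadQ_rho ha1 u.1 u.2.2, hu1, quadQ_sig' ha v.1 v.2.1 v.2.2]
      simp only [expE, eq_self_iff_true, if_true]
      ring
    · rw [hmod, happ]
      have hval : rhoFun a u.1 (a - 1) = -v.1 (a - 1) := by
        rw [rhoFun_apply u.1 (by omega : a - 1 < a), Nat.sub_self, hu1,
          sigFun'_apply_zero ha1 v.1]
      simp only [expE, if_neg (by omega : ¬ a - 1 = 0), eq_self_iff_true, if_true, hval]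
      push_cast [Nat.cast_sub ha1]
      ring
  · rcases Nat.lt_or_ge t 2 with ht1' | ht2
    · -- t = 1
      have ht1'' : t = 1 := by omega
      subst ht1''
      refine ⟨((sig a ha1).trans (tauEquiv a 0 (a - 1) (by omega) (by omega))).trans
        (rho a ha1), fun v => ?_⟩
      set u1 : V a := (sig a ha1) v with hu1def
      set u2 : V a := tauEquiv a 0 (a - 1) (by omega) (by omega) u1 with hu2def
      have hu1 : u1.1 = sigFun a v.1 := rfl
      have hu2 : u2.1 = tauFun 0 (a - 1) u1.1 := rfl
      have happ : ((((sig a ha1).trans (tauEquiv a 0 (a - 1) (by omega) (by omega))).trans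
          (rho a ha1)) v).1 = rhoFun a u2.1 := rfl
      have hv1 : u1.1 0 = v.1 1 := by
        rw [hu1, sigFun_apply_lt v.1 (by omega : 0 < a - 1)]
      have hv2 : u1.1 (a - 1) = v.1 0 := by rw [hu1, sigFun_apply_last ha1 v.1]
      have hmod : (1 + (a - 1)) % a = 0 := by
        have h : 1 + (a - 1) = a := by omega
        rw [h, Nat.mod_self]
      constructor
      · rw [happ, quadQ_rho ha1 u2.1 u2.2.2, hu2,
          quadQ_tau (by omega : 0 < a) (by omega : a - 1 < a) (by omega) u1.1,
          hu1, quadQ_sig ha v.1 v.2.2]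
        rw [hu1] at hv1 hv2
        rw [hv1, hv2]
        simp only [expE, if_neg (by omega : ¬ (1:ℕ) = 0)]
        push_cast [Nat.cast_sub ha1]
        ring
      · rw [hmod, happ]
        have hval : rhoFun a u2.1 (a - 1) = -(v.1 1 + 1) := by
          rw [rhoFun_apply u2.1 (by omega : a - 1 < a), Nat.sub_self, hu2]
          simp only [tauFun, eq_self_iff_true, if_true,
            if_neg (by omega : ¬ (0:ℕ) = a - 1), hv1]
          ring
        simp only [expE, eq_self_iff_true, if_true, if_neg (by omega : ¬ (1:ℕ) = 0), hval]
        push_cast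
        ring
    · -- 2 ≤ t
      refine ⟨(sig a ha1).trans (tauEquiv a (t - 1) (a - 1) (by omega) (by omega)),
        fun v => ?_⟩
      set u1 : V a := (sig a ha1) v with hu1def
      have hu1 : u1.1 = sigFun a v.1 := rfl
      have happ : (((sig a ha1).trans (tauEquiv a (t - 1) (a - 1) (by omega) (by omega))) v).1
          = tauFun (t - 1) (a - 1) u1.1 := rfl
      have hv1 : u1.1 (t - 1) = v.1 t := by
        rw [hu1, sigFun_apply_lt v.1 (by omega : t - 1 < a - 1)]
        have h : t - 1 + 1 = t := by omega
        rw [h]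
      have hv2 : u1.1 (a - 1) = v.1 0 := by rw [hu1, sigFun_apply_last ha1 v.1]
      have hmod : (t + (a - 1)) % a = t - 1 := by
        have h : t + (a - 1) = (t - 1) + a := by omega
        rw [h, Nat.add_mod_right, Nat.mod_eq_of_lt (by omega)]
      constructor
      · rw [happ, quadQ_tau (by omega : t - 1 < a) (by omega : a - 1 < a) (by omega) u1.1,
          hu1, quadQ_sig ha v.1 v.2.2]
        rw [hu1] at hv1 hv2
        rw [hv1, hv2]
        simp only [expE, if_neg (by omega : ¬ t = 0)]
        push_cast [Nat.cast_sub ha1, Nat.cast_sub (by omega : 1 ≤ t)]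
        ring
      · rw [hmod, happ]
        have hval : tauFun (t - 1) (a - 1) u1.1 (t - 1) = v.1 t + 1 := by
          simp only [tauFun, eq_self_iff_true, if_true,
            if_neg (by omega : ¬ t - 1 = a - 1), hv1]
          ring
        simp only [expE, if_neg (by omega : ¬ t - 1 = 0), if_neg (by omega : ¬ t = 0), hval]
        push_cast [Nat.cast_sub ha1, Nat.cast_sub (by omega : 1 ≤ t)]
        ring

end BigCAux
end p4

section p5
namespace BigCAux
open Finset

lemma zpow_finsetSum {ι : Type*} {x : ℝ} (hx : x ≠ 0) (s : Finset ι) (f : ι → ℤ) :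
    x ^ (∑ i ∈ s, f i) = ∏ i ∈ s, x ^ f i := by
  classical
  induction s using Finset.cons_induction with
  | empty => simp
  | cons i s hi ih => rw [Finset.sum_cons, Finset.prod_cons, zpow_add₀ hx, ih]

lemma pow_le_pow_K {x K : ℝ} (hx : 0 ≤ x) (hxK : x ≤ K) (k : ℕ) :
    x ^ (k : ℤ) ≤ K ^ (k : ℤ) := by
  rw [zpow_natCast, zpow_natCast]
  exact pow_le_pow_left₀ hx hxK k

lemma zpow_le_of_abs_le {x K : ℝ} (hx : 0 < x) (hxK : x ≤ K) (hxK' : x⁻¹ ≤ K)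
    (hK : 1 ≤ K) {m n : ℤ} (h : |m| ≤ n) : x ^ m ≤ K ^ n := by
  rcases le_total 0 m with hm | hm
  · obtain ⟨k, rfl⟩ := Int.eq_ofNat_of_zero_le hm
    calc x ^ (k : ℤ) ≤ K ^ (k : ℤ) := pow_le_pow_K hx.le hxK k
      _ ≤ K ^ n := zpow_le_zpow_right₀ hK (le_trans (le_abs_self _) h)
  · have hxm : x ^ m = (x⁻¹) ^ (-m) := by rw [inv_zpow, ← zpow_neg, neg_neg]
    obtain ⟨k, hk⟩ := Int.eq_ofNat_of_zero_le (neg_nonneg.mpr hm)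
    rw [hxm, hk]
    calc (x⁻¹) ^ (k : ℤ) ≤ K ^ (k : ℤ) := pow_le_pow_K (inv_nonneg.mpr hx.le) hxK' k
      _ ≤ K ^ n := zpow_le_zpow_right₀ hK (by rw [← hk]; exact le_trans (neg_le_abs _) h)

lemma summable_phi {r K : ℝ} (hr0 : 0 < r) (hr1 : r < 1) (hK : 1 ≤ K) (c : ℕ) :
    Summable (fun k : ℤ => r ^ (k ^ 2) * K ^ ((c : ℤ) * |k|)) := by
  have hK0 : (0 : ℝ) < K := by linarith
  have hKc : (0 : ℝ) < K ^ c := pow_pos hK0 c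
  have hnat : Summable (fun n : ℕ => r ^ (n ^ 2) * K ^ (c * n)) := by
    apply summable_of_ratio_norm_eventually_le (r := 1/2) (by norm_num)
    have htend := tendsto_pow_atTop_nhds_zero_of_lt_one hr0.le hr1
    have hev : ∀ᶠ n : ℕ in Filter.atTop, r ^ n < (1/2) / K ^ c :=
      htend.eventually_lt_const (by positivity)
    filter_upwards [hev] with n hn
    have hb : r ^ (2 * n + 1) * K ^ c ≤ 1 / 2 := by
      have h1 : r ^ (2 * n + 1) ≤ r ^ n := pow_le_pow_of_le_one hr0.le hr1.le (by omega)
      have h2 : r ^ n * K ^ c < 1 / 2 := (lt_div_iff₀ hKc).mp hn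
      nlinarith [pow_pos hr0 (2 * n + 1), pow_pos hr0 n]
    have hA : (0 : ℝ) ≤ r ^ (n ^ 2) * K ^ (c * n) := by positivity
    have heq : r ^ ((n + 1) ^ 2) * K ^ (c * (n + 1))
        = (r ^ (n ^ 2) * K ^ (c * n)) * (r ^ (2 * n + 1) * K ^ c) := by
      rw [show (n + 1) ^ 2 = n ^ 2 + (2 * n + 1) by ring,
        show c * (n + 1) = c * n + c by ring, pow_add, pow_add]
      ring
    rw [Real.norm_eq_abs, Real.norm_eq_abs, abs_of_nonneg (by positivity),
      abs_of_nonneg hA, heq]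
    calc (r ^ (n ^ 2) * K ^ (c * n)) * (r ^ (2 * n + 1) * K ^ c)
        ≤ (r ^ (n ^ 2) * K ^ (c * n)) * (1 / 2) := mul_le_mul_of_nonneg_left hb hA
      _ = 1 / 2 * (r ^ (n ^ 2) * K ^ (c * n)) := by ring
  have e1 : ∀ n : ℕ, r ^ (((n : ℤ)) ^ 2) * K ^ ((c : ℤ) * |(n : ℤ)|)
      = r ^ (n ^ 2) * K ^ (c * n) := by
    intro n
    rw [show ((n : ℤ)) ^ 2 = ((n ^ 2 : ℕ) : ℤ) by push_cast; ring,
      show (c : ℤ) * |(n : ℤ)| = ((c * n : ℕ) : ℤ) by rw [Nat.abs_cast]; push_cast; ring,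
      zpow_natCast, zpow_natCast]
  apply Summable.of_nat_of_neg
  · exact hnat.congr fun n => (e1 n).symm
  · refine hnat.congr fun n => ?_
    rw [show (-(n : ℤ)) ^ 2 = ((n : ℤ)) ^ 2 by ring, abs_neg]
    exact (e1 n).symm

lemma summable_pi {φ : ℤ → ℝ} (h0 : ∀ k, 0 ≤ φ k) (hs : Summable φ) :
    ∀ n : ℕ, Summable (fun v : Fin n → ℤ => ∏ i, φ (v i)) := by
  intro n
  induction n with
  | zero =>
    have h : (fun v : Fin 0 → ℤ => ∏ i, φ (v i)) = fun _ => 1 := by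
      funext v; simp
    rw [h]
    exact (hasSum_single (f := fun _ : (Fin 0 → ℤ) => (1:ℝ)) default
      (fun b hb => absurd (funext fun i => i.elim0) hb)).summable
  | succ n ih =>
    have hmul : Summable (fun p : ℤ × (Fin n → ℤ) => φ p.1 * ∏ i, φ (p.2 i)) := by
      apply Summable.mul_of_nonneg hs ih h0
      intro v
      exact Finset.prod_nonneg fun i _ => h0 _
    refine ((Fin.consEquiv (fun _ : Fin (n + 1) => ℤ)).summable_iff).mp ?_
    refine hmul.congr fun p => ?_
    simp [Fin.consEquiv, Fin.prod_univ_succ]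

end BigCAux
end p5

section p6
namespace BigCAux
open Finset
variable {a : ℕ}

lemma summable_gterm (ha : 2 ≤ a) {z q : ℂ} (hz : z ≠ 0) (hq0 : q ≠ 0) (hq : ‖q‖ < 1)
    {t : ℕ} (ht : t < a) : Summable (gterm a t z q) := by
  have hr0 : 0 < ‖q‖ := norm_pos_iff.mpr hq0
  have hs0 : 0 < ‖z‖ := norm_pos_iff.mpr hz
  set K : ℝ := max (max ‖q‖⁻¹ ‖z‖) (max ‖z‖⁻¹ 1) with hKdef
  have hK1 : 1 ≤ K := le_trans (le_max_right _ _) (le_max_right _ _)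
  have hKr : ‖q‖⁻¹ ≤ K := le_trans (le_max_left _ _) (le_max_left _ _)
  have hKs : ‖z‖ ≤ K := le_trans (le_max_right _ _) (le_max_left _ _)
  have hKs' : ‖z‖⁻¹ ≤ K := le_trans (le_max_left _ _) (le_max_right _ _)
  have hK0 : (0:ℝ) < K := lt_of_lt_of_le one_pos hK1
  have hKr' : ‖q‖ ≤ K := le_trans hq.le hK1
  have ha' : (2:ℤ) ≤ (a:ℤ) := by exact_mod_cast ha
  set φ : ℤ → ℝ := fun k => ‖q‖ ^ (k ^ 2) * K ^ (((2 * a : ℕ) : ℤ) * |k|) with hφdef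
  have hφ0 : ∀ k, 0 ≤ φ k := fun k => by
    rw [hφdef]
    positivity
  have hφsum : Summable φ := summable_phi hr0 hq hK1 (2 * a)
  -- the pointwise bound
  have key : ∀ v : V a,
      ‖gterm a t z q v‖ ≤ K ^ (a : ℤ) * ∏ i ∈ Ico 1 a, φ (v.1 i) := by
    intro v
    obtain ⟨w, hwsupp, hwsum⟩ := v
    simp only [gterm, norm_mul, norm_zpow]
    set P1 : ℝ := ∏ i ∈ Ico 1 a, (‖q‖ ^ (w i ^ 2) * K ^ ((a:ℤ) * |w i|)) with hP1
    set P2 : ℝ := ∏ i ∈ Ico 1 a, K ^ ((a:ℤ) * |w i|) with hP2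
    have hP1nn : 0 ≤ P1 := Finset.prod_nonneg fun i _ => by positivity
    have hP2nn : 0 ≤ P2 := Finset.prod_nonneg fun i _ => by positivity
    have hS0 : (0:ℤ) ≤ ∑ i ∈ range a, w i ^ 2 := Finset.sum_nonneg fun i _ => sq_nonneg _
    have hQ : ∑ i ∈ range a, (w i ^ 2 + (i:ℤ) * w i) ≤ quadQ a w := by
      unfold quadQ
      rw [Finset.sum_add_distrib]
      have h1 : ∑ i ∈ range a, w i ^ 2 ≤ ((a:ℤ) * ∑ i ∈ range a, w i ^ 2) / 2 := by
        rw [Int.le_ediv_iff_mul_le (by norm_num : (0:ℤ) < 2)]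
        nlinarith [hS0, ha']
      linarith
    have hQ2 : ‖q‖ ^ quadQ a w ≤ ‖q‖ ^ (∑ i ∈ range a, (w i ^ 2 + (i:ℤ) * w i)) :=
      zpow_le_zpow_right_of_le_one₀ hr0 hq.le hQ
    have hsplit : ‖q‖ ^ (∑ i ∈ range a, (w i ^ 2 + (i:ℤ) * w i))
        = ‖q‖ ^ (w 0 ^ 2) * ∏ i ∈ Ico 1 a, ‖q‖ ^ (w i ^ 2 + (i:ℤ) * w i) := by
      rw [zpow_finsetSum (ne_of_gt hr0) (range a) (fun i => w i ^ 2 + (i:ℤ) * w i),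
        Finset.range_eq_Ico,
        Finset.prod_eq_prod_Ico_succ_bot (by omega : 0 < a)
          (fun i => ‖q‖ ^ (w i ^ 2 + (i:ℤ) * w i))]
      norm_num
    have hfac : ∀ i ∈ Ico 1 a,
        ‖q‖ ^ (w i ^ 2 + (i:ℤ) * w i) ≤ ‖q‖ ^ (w i ^ 2) * K ^ ((a:ℤ) * |w i|) := by
      intro i hi
      rw [zpow_add₀ (ne_of_gt hr0)]
      refine mul_le_mul_of_nonneg_left ?_ (zpow_nonneg hr0.le _)
      refine zpow_le_of_abs_le hr0 hKr' hKr hK1 ?_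
      rw [abs_mul, abs_of_nonneg (by positivity : (0:ℤ) ≤ (i:ℤ))]
      have hia : (i:ℤ) ≤ (a:ℤ) := by
        have := (mem_Ico.mp hi).2
        exact_mod_cast this.le
      exact mul_le_mul_of_nonneg_right hia (abs_nonneg _)
    have hprod1 : ∏ i ∈ Ico 1 a, ‖q‖ ^ (w i ^ 2 + (i:ℤ) * w i) ≤ P1 :=
      Finset.prod_le_prod (fun i _ => zpow_nonneg hr0.le _) hfac
    have hone : ‖q‖ ^ (w 0 ^ 2) ≤ 1 := by
      have h := zpow_le_zpow_right_of_le_one₀ hr0 hq.le (sq_nonneg (w 0))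
      simpa using h
    have hA : ‖q‖ ^ quadQ a w ≤ P1 := by
      calc ‖q‖ ^ quadQ a w ≤ ‖q‖ ^ (∑ i ∈ range a, (w i ^ 2 + (i:ℤ) * w i)) := hQ2
        _ = ‖q‖ ^ (w 0 ^ 2) * ∏ i ∈ Ico 1 a, ‖q‖ ^ (w i ^ 2 + (i:ℤ) * w i) := hsplit
        _ ≤ 1 * P1 := mul_le_mul hone hprod1
            (Finset.prod_nonneg fun i _ => zpow_nonneg hr0.le _) zero_le_one
        _ = P1 := one_mul _
    set c : ℕ := if t = 0 then a - 1 else t with hcdef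
    have hc : c ∈ Ico 1 a := by
      rw [mem_Ico, hcdef]
      by_cases h : t = 0 <;> simp [h] <;> omega
    have hE : |expE a t w| ≤ (a:ℤ) * |w c| + (a:ℤ) := by
      by_cases h : t = 0
      · simp only [expE, hcdef, if_pos h]
        rw [abs_mul, abs_neg, abs_of_nonneg (by positivity : (0:ℤ) ≤ (a:ℤ))]
        nlinarith [abs_nonneg (w (a-1)), ha']
      · simp only [expE, hcdef, if_neg h]
        have h1 : |(a:ℤ) * w t + (t:ℤ)| ≤ |(a:ℤ) * w t| + |(t:ℤ)| := abs_add_le _ _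
        rw [abs_mul, abs_of_nonneg (by positivity : (0:ℤ) ≤ (a:ℤ))] at h1
        have h2 : |(t:ℤ)| ≤ (a:ℤ) := by
          rw [abs_of_nonneg (by positivity : (0:ℤ) ≤ (t:ℤ))]
          exact_mod_cast ht.le
        linarith
    have hE2 : ‖z‖ ^ expE a t w ≤ K ^ ((a:ℤ) * |w c| + (a:ℤ)) :=
      zpow_le_of_abs_le hs0 hKs hKs' hK1 hE
    have hsingle : K ^ ((a:ℤ) * |w c|) ≤ P2 := by
      have h1 : K ^ ((a:ℤ) * |w c|)
          = ∏ i ∈ Ico 1 a, (if i = c then K ^ ((a:ℤ) * |w i|) else 1) := by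
        rw [Finset.prod_ite_eq' (Ico 1 a) c (fun i => K ^ ((a:ℤ) * |w i|)), if_pos hc]
      rw [hP2, h1]
      apply Finset.prod_le_prod
      · intro i _
        split_ifs
        · positivity
        · norm_num
      · intro i _
        split_ifs with h
        · exact le_refl _
        · exact one_le_zpow₀ hK1 (by positivity)
    have hB : ‖z‖ ^ expE a t w ≤ P2 * K ^ (a:ℤ) := by
      calc ‖z‖ ^ expE a t w ≤ K ^ ((a:ℤ) * |w c| + (a:ℤ)) := hE2
        _ = K ^ ((a:ℤ) * |w c|) * K ^ (a:ℤ) := zpow_add₀ (ne_of_gt hK0) _ _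
        _ ≤ P2 * K ^ (a:ℤ) := mul_le_mul_of_nonneg_right hsingle (zpow_nonneg hK0.le _)
    have hfinal : P1 * (P2 * K ^ (a:ℤ)) = K ^ (a:ℤ) * ∏ i ∈ Ico 1 a, φ (w i) := by
      have hm : ∏ i ∈ Ico 1 a, φ (w i) = P1 * P2 := by
        rw [hP1, hP2, ← Finset.prod_mul_distrib]
        refine Finset.prod_congr rfl fun i _ => ?_
        rw [hφdef]
        simp only []
        rw [mul_assoc, ← zpow_add₀ (ne_of_gt hK0)]
        congr 2
        push_cast
        ring
      rw [hm]; ring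
    calc ‖q‖ ^ quadQ a w * ‖z‖ ^ expE a t w
        ≤ P1 * (P2 * K ^ (a:ℤ)) :=
          mul_le_mul hA hB (zpow_nonneg hs0.le _) hP1nn
      _ = K ^ (a:ℤ) * ∏ i ∈ Ico 1 a, φ (w i) := hfinal
  -- summability of the bound
  have hpi := summable_pi hφ0 hφsum (a - 1)
  have hιinj : Function.Injective (fun (v : V a) (i : Fin (a - 1)) => v.1 (1 + (i:ℕ))) := by
    intro v w h
    have hco : ∀ j ∈ Ico 1 a, v.1 j = w.1 j := by
      intro j hj
      rw [mem_Ico] at hj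
      have h1 := congrFun h ⟨j - 1, by omega⟩
      simpa [(by omega : 1 + (j - 1) = j)] using h1
    apply Subtype.ext; funext i
    rcases Nat.lt_or_ge i a with hi | hi
    · rcases Nat.eq_zero_or_pos i with rfl | hipos
      · have hv' : v.1 0 + ∑ j ∈ Ico 1 a, v.1 j = 0 := by
          rw [← Finset.sum_eq_sum_Ico_succ_bot (by omega : 0 < a) v.1, ← Finset.range_eq_Ico]
          exact v.2.2
        have hw' : w.1 0 + ∑ j ∈ Ico 1 a, w.1 j = 0 := by
          rw [← Finset.sum_eq_sum_Ico_succ_bot (by omega : 0 < a) w.1, ← Finset.range_eq_Ico]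
          exact w.2.2
        have hsum2 : ∑ j ∈ Ico 1 a, v.1 j = ∑ j ∈ Ico 1 a, w.1 j :=
          Finset.sum_congr rfl hco
        linarith
      · exact hco i (mem_Ico.mpr ⟨by omega, hi⟩)
    · rw [v.2.1 i hi, w.2.1 i hi]
  have hcomp : Summable ((fun u : Fin (a - 1) → ℤ => K ^ (a:ℤ) * ∏ i, φ (u i)) ∘
      (fun (v : V a) (i : Fin (a - 1)) => v.1 (1 + (i:ℕ)))) :=
    (hpi.mul_left _).comp_injective hιinj
  have hreindex : ∀ v : V a,
      ∏ i ∈ Ico 1 a, φ (v.1 i) = ∏ i : Fin (a - 1), φ (v.1 (1 + (i:ℕ))) := by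
    intro v
    rw [Finset.prod_Ico_eq_prod_range]
    exact (Fin.prod_univ_eq_prod_range (fun k => φ (v.1 (1 + k))) (a - 1)).symm
  have hboundsum : Summable (fun v : V a =>
      K ^ (a:ℤ) * ∏ i : Fin (a - 1), φ (v.1 (1 + (i:ℕ)))) :=
    hcomp.congr (fun v => rfl)
  apply Summable.of_norm
  refine Summable.of_nonneg_of_le (fun v => norm_nonneg _) (fun v => ?_) hboundsum
  rw [← hreindex v]
  exact key v

end BigCAux
end p6

section p7
namespace BigCAux
open Finset
variable {a : ℕ}

lemma sum_range_split {M : Type*} [AddCommMonoid M] (ha : 0 < a) (f : ℕ → M) :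
    ∑ i ∈ range a, f i = f 0 + ∑ t ∈ Ico 1 a, f t := by
  rw [Finset.range_eq_Ico]
  exact Finset.sum_eq_sum_Ico_succ_bot ha f

lemma gterm_shift {z q : ℂ} (hz : z ≠ 0) (hq0 : q ≠ 0)
    {t : ℕ} (e : V a ≃ V a)
    (he : ∀ v : V a, quadQ a (e v).1 = quadQ a v.1 + expE a t v.1 ∧
      expE a ((t + (a - 1)) % a) (e v).1 = expE a t v.1 + ((a:ℤ) - 1)) :
    ∀ v : V a, gterm a ((t + (a - 1)) % a) z q (e v)
      = z ^ ((a:ℤ) - 1) * gterm a t (z * q) q v := by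
  intro v
  obtain ⟨h1, h2⟩ := he v
  simp only [gterm, h1, h2]
  rw [zpow_add₀ hq0, zpow_add₀ hz, mul_zpow]
  ring

end BigCAux
end p7


open BigCAux Finset in
theorem bigC_functional_equation (a : ℕ) (ha : 2 ≤ a) (z q : ℂ)
    (hz : z ≠ 0) (hq : ‖q‖ < 1) (hq0 : q ≠ 0) :
    bigC a (z * q) q = z ^ (-((a : ℤ) - 1)) * bigC a z q := by
  have ha1 : 1 ≤ a := by omega
  have hzq : z * q ≠ 0 := mul_ne_zero hz hq0
  have hSz : ∀ t ∈ Finset.range a, Summable (gterm a t z q) := fun t ht =>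
    summable_gterm ha hz hq0 hq (Finset.mem_range.mp ht)
  have hTt : ∀ t, t < a → (Summable (gterm a t (z * q) q) ∧
      ∑' v : V a, gterm a t (z * q) q v
        = z ^ (-((a:ℤ) - 1)) * ∑' v : V a, gterm a ((t + (a - 1)) % a) z q v) := by
    intro t ht
    obtain ⟨e, he⟩ := BigCAux.key ha ht
    have hshift := gterm_shift hz hq0 e he
    have hmod : (t + (a - 1)) % a < a := Nat.mod_lt _ (by omega)
    have hsum' : Summable (gterm a ((t + (a - 1)) % a) z q) :=
      summable_gterm ha hz hq0 hq hmod
    have hza : z ^ ((a:ℤ) - 1) ≠ 0 := zpow_ne_zero _ hz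
    have hptwise : ∀ v : V a, gterm a t (z * q) q v
        = z ^ (-((a:ℤ) - 1)) * gterm a ((t + (a - 1)) % a) z q (e v) := by
      intro v
      rw [hshift v, ← mul_assoc, zpow_neg, inv_mul_cancel₀ hza, one_mul]
    constructor
    · have hc : Summable (fun v : V a => gterm a ((t + (a - 1)) % a) z q (e v)) :=
        hsum'.comp_injective e.injective
      exact (hc.mul_left _).congr fun v => (hptwise v).symm
    · calc ∑' v : V a, gterm a t (z * q) q v
          = ∑' v : V a, z ^ (-((a:ℤ) - 1)) * gterm a ((t + (a - 1)) % a) z q (e v) :=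
            tsum_congr hptwise
        _ = z ^ (-((a:ℤ) - 1)) * ∑' v : V a, gterm a ((t + (a - 1)) % a) z q (e v) :=
            tsum_mul_left
        _ = z ^ (-((a:ℤ) - 1)) * ∑' v : V a, gterm a ((t + (a - 1)) % a) z q v := by
            rw [e.tsum_eq]
  have hsplit : ∀ (z' : ℂ), (∀ t ∈ Finset.range a, Summable (gterm a t z' q)) →
      bigC a z' q = ∑ t ∈ Finset.range a, ∑' v : V a, gterm a t z' q v := by
    intro z' hs
    rw [← Summable.tsum_finsetSum hs]
    unfold bigC
    apply tsum_congr
    intro v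
    rw [sum_range_split (by omega : 0 < a) (fun t => gterm a t z' q v)]
    have h0 : gterm a 0 z' q v = q ^ quadQ a v.1 * z' ^ (-(a:ℤ) * v.1 (a - 1)) := by
      simp [gterm, expE]
    have hrest : ∑ t ∈ Ico 1 a, gterm a t z' q v
        = ∑ t ∈ Ico 1 a, q ^ quadQ a v.1 * z' ^ ((a:ℤ) * v.1 t + (t:ℤ)) := by
      refine Finset.sum_congr rfl fun t htm => ?_
      rw [mem_Ico] at htm
      simp only [gterm, expE, if_neg (by omega : ¬ t = 0)]
    rw [h0, hrest, ← Finset.mul_sum]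
    ring
  have hSzq : ∀ t ∈ Finset.range a, Summable (gterm a t (z * q) q) := fun t ht =>
    (hTt t (Finset.mem_range.mp ht)).1
  rw [hsplit (z * q) hSzq, hsplit z hSz]
  calc ∑ t ∈ range a, ∑' v : V a, gterm a t (z * q) q v
      = ∑ t ∈ range a, z ^ (-((a:ℤ) - 1)) * ∑' v : V a, gterm a ((t + (a - 1)) % a) z q v :=
        Finset.sum_congr rfl fun t ht => (hTt t (Finset.mem_range.mp ht)).2
    _ = z ^ (-((a:ℤ) - 1)) * ∑ t ∈ range a, ∑' v : V a, gterm a ((t + (a - 1)) % a) z q v :=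
        (Finset.mul_sum _ _ _).symm
    _ = z ^ (-((a:ℤ) - 1)) * ∑ t ∈ range a, ∑' v : V a, gterm a t z q v := by
        rw [sum_cycle'_a ha1 (fun t => ∑' v : V a, gterm a t z q v)]

end
end

section
/- Let p be a prime, M an odd positive integer with p ∤ M, and N = pM. Then ∏_{1 ≤ r ≤ (M-1)/2, gcd(r,M)=1} D_p(q^r; q^M) = S_N(q), where D_a(z;q) := E(q^a)^{2a-2} [z^a; q^a]_∞ / [z; q]_∞ and S_N(q) := E(q^N)^{φ(N)} / ∏_{d∣N} E(q^d)^{μ(d)}. -/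
/-!
STATEMENT 9 (equation (3.8) of the paper, Case 2 of the proof of Saito's conjecture):
Let `p` be a prime, `M` an odd positive integer with `p ∤ M` (and `M > 1`, as the case
`M = 1` is Case 1 of the paper), and `N = pM`.  Then
`∏_{1 ≤ r ≤ (M-1)/2, gcd(r,M)=1} D_p(q^r; q^M) = S_N(q)`,
where `D_a(z;q) = E(q^a)^{2a-2} [z^a;q^a]_∞ / [z;q]_∞` and
`S_N(q) = E(q^N)^{φ(N)} / ∏_{d ∣ N} E(q^d)^{μ(d)}`.
-/

noncomputable section

/-- Euler's product `E(q) = ∏_{n ≥ 1} (1 - q^n)`. -/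
def euler (q : ℂ) : ℂ := ∏' n : ℕ, (1 - q ^ (n + 1))

/-- The theta-like product `[z;q]_∞ = ∏_{n≥1} (1 - z q^{n-1})(1 - z^{-1} q^n)`. -/
def thetaProd (z q : ℂ) : ℂ := ∏' n : ℕ, ((1 - z * q ^ n) * (1 - z⁻¹ * q ^ (n + 1)))

/-- `D_a(z;q) = E(q^a)^{2a-2} [z^a;q^a]_∞ / [z;q]_∞`. -/
def bigD (a : ℕ) (z q : ℂ) : ℂ :=
  euler (q ^ a) ^ (2 * a - 2) * thetaProd (z ^ a) (q ^ a) / thetaProd z q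

/-- `S_N(q) = E(q^N)^{φ(N)} / ∏_{d ∣ N} E(q^d)^{μ(d)}`. -/
def saitoS (N : ℕ) (q : ℂ) : ℂ :=
  euler (q ^ N) ^ N.totient / ∏ d ∈ N.divisors, euler (q ^ d) ^ (ArithmeticFunction.moebius d)

set_option maxHeartbeats 1000000
open scoped Classical

/-- the factor: `1 - q^k` if `k ∈ S` and `k ≠ 0`, else `1`. -/
def pif (q : ℂ) (S : Set ℕ) (k : ℕ) : ℂ := if k ∈ S ∧ k ≠ 0 then 1 - q ^ k else 1

/-- restricted product -/
def PP (q : ℂ) (S : Set ℕ) : ℂ := ∏' k : ℕ, pif q S k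

variable {q : ℂ}

lemma norm_pow_lt (hq : ‖q‖ < 1) {k : ℕ} (hk : k ≠ 0) : ‖q ^ k‖ < 1 := by
  rw [norm_pow]
  calc ‖q‖ ^ k ≤ ‖q‖ ^ 1 := pow_le_pow_of_le_one (norm_nonneg q) hq.le (Nat.one_le_iff_ne_zero.2 hk)
  _ = ‖q‖ := pow_one _
  _ < 1 := hq

lemma pif_ne_zero (hq : ‖q‖ < 1) (S : Set ℕ) (k : ℕ) : pif q S k ≠ 0 := by
  unfold pif
  split
  · rename_i h
    intro hc
    have : q ^ k = 1 := by linear_combination -hc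
    have h2 := norm_pow_lt hq h.2
    rw [this] at h2
    simp at h2
  · exact one_ne_zero

lemma summable_log_pif (hq : ‖q‖ < 1) (S : Set ℕ) : Summable fun k => Complex.log (pif q S k) := by
  have hg : Summable fun k : ℕ => (3 / 2 : ℝ) * ‖q‖ ^ k :=
    (summable_geometric_of_lt_one (norm_nonneg q) hq).mul_left _
  apply Summable.of_norm_bounded_eventually hg
  rw [Nat.cofinite_eq_atTop]
  have htt : Filter.Tendsto (fun k : ℕ => ‖q‖ ^ k) Filter.atTop (nhds 0) :=
    tendsto_pow_atTop_nhds_zero_of_lt_one (norm_nonneg q) hq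
  filter_upwards [htt.eventually_le_const (by norm_num : (0:ℝ) < 1/2)] with k hk
  unfold pif
  split
  · rename_i h
    have h1 : ‖(-(q ^ k) : ℂ)‖ ≤ 1 / 2 := by rwa [norm_neg, norm_pow]
    calc ‖Complex.log (1 - q ^ k)‖ = ‖Complex.log (1 + -(q ^ k))‖ := by ring_nf
    _ ≤ 3 / 2 * ‖(-(q ^ k) : ℂ)‖ := Complex.norm_log_one_add_half_le_self h1
    _ ≤ 3 / 2 * ‖q‖ ^ k := by rw [norm_neg, norm_pow]
  · rw [Complex.log_one]
    simp only [norm_zero]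
    positivity

lemma multipliable_pif (hq : ‖q‖ < 1) (S : Set ℕ) : Multipliable (pif q S) :=
  Complex.multipliable_of_summable_log (summable_log_pif hq S)

lemma PP_ne_zero (hq : ‖q‖ < 1) (S : Set ℕ) : PP q S ≠ 0 := by
  have := Complex.cexp_tsum_eq_tprod (pif_ne_zero hq S) (summable_log_pif hq S)
  rw [PP, ← this]
  exact Complex.exp_ne_zero _

lemma PP_union (hq : ‖q‖ < 1) {A B : Set ℕ} (hAB : Disjoint A B) :
    PP q (A ∪ B) = PP q A * PP q B := by
  rw [PP, PP, PP, ← Multipliable.tprod_mul (multipliable_pif hq A) (multipliable_pif hq B)]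
  apply tprod_congr
  intro k
  unfold pif
  by_cases hA : k ∈ A
  · have hB : k ∉ B := fun hB => Set.disjoint_left.1 hAB hA hB
    by_cases h0 : k = 0 <;> simp [hA, hB, h0]
  · by_cases hB : k ∈ B
    · by_cases h0 : k = 0 <;> simp [hA, hB, h0]
    · simp [hA, hB]

lemma PP_biUnion (hq : ‖q‖ < 1) {ι : Type*} (t : Finset ι) (A : ι → Set ℕ)
    (hdisj : ∀ i ∈ t, ∀ j ∈ t, i ≠ j → Disjoint (A i) (A j)) :
    PP q (⋃ i ∈ t, A i) = ∏ i ∈ t, PP q (A i) := by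
  classical
  induction t using Finset.induction with
  | empty => simp [PP, pif]
  | insert a s hx ih =>
    rw [Finset.prod_insert hx, ← ih (fun i hi j hj hij =>
      hdisj i (Finset.mem_insert_of_mem hi) j (Finset.mem_insert_of_mem hj) hij)]
    have : (⋃ i ∈ insert a s, A i) = A a ∪ ⋃ i ∈ s, A i := by
      simp [Set.biUnion_insert]
    rw [this, PP_union hq]
    rw [Set.disjoint_left]
    intro k hk hk2
    simp only [Set.mem_iUnion] at hk2
    obtain ⟨i, hi, hki⟩ := hk2
    exact Set.disjoint_left.1
      (hdisj a (Finset.mem_insert_self a s) i (Finset.mem_insert_of_mem hi)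
        (fun h => hx (h ▸ hi))) hk hki

lemma PP_range (hq : ‖q‖ < 1) (e : ℕ → ℕ) (he : Function.Injective e)
    (h0 : ∀ n, e n ≠ 0) : ∏' n : ℕ, (1 - q ^ e n) = PP q (Set.range e) := by
  rw [PP, ← he.tprod_eq (f := pif q (Set.range e))]
  · apply tprod_congr
    intro n
    unfold pif
    rw [if_pos ⟨Set.mem_range_self n, h0 n⟩]
  · intro x hx
    by_contra hxr
    apply hx
    unfold pif
    rw [if_neg (fun h => hxr h.1)]

lemma multipliable_sub_pow (hq : ‖q‖ < 1) (e : ℕ → ℕ) (he : Function.Injective e)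
    (h0 : ∀ n, e n ≠ 0) : Multipliable fun n : ℕ => (1 - q ^ e n) := by
  have hs : Summable fun n => Complex.log (1 - q ^ e n) := by
    have := (summable_log_pif hq (Set.range e)).comp_injective he
    apply this.congr
    intro n
    show Complex.log (pif q (Set.range e) (e n)) = _
    rw [pif, if_pos ⟨Set.mem_range_self n, h0 n⟩]
  exact Complex.multipliable_of_summable_log hs

lemma pif_congr (q : ℂ) {S T : Set ℕ} (h : ∀ k, k ≠ 0 → (k ∈ S ↔ k ∈ T)) :
    pif q S = pif q T := by
  funext k
  unfold pif
  by_cases h0 : k = 0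
  · rw [if_neg (fun hc => hc.2 h0), if_neg (fun hc => hc.2 h0)]
  · by_cases hS : k ∈ S
    · rw [if_pos ⟨hS, h0⟩, if_pos ⟨(h k h0).1 hS, h0⟩]
    · rw [if_neg (fun hc => hS hc.1), if_neg (fun hc => hS ((h k h0).2 hc.1))]

lemma PP_congr (q : ℂ) {S T : Set ℕ} (h : ∀ k, k ≠ 0 → (k ∈ S ↔ k ∈ T)) :
    PP q S = PP q T := by
  unfold PP
  rw [pif_congr q h]

lemma euler_eq (hq : ‖q‖ < 1) {d : ℕ} (hd : d ≠ 0) :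
    euler (q ^ d) = PP q {k | d ∣ k} := by
  have he : Function.Injective (fun n : ℕ => d * (n + 1)) := by
    intro a b h
    simp only at h
    have := Nat.eq_of_mul_eq_mul_left (Nat.pos_of_ne_zero hd) h
    omega
  have h0 : ∀ n, d * (n + 1) ≠ 0 := fun n => by positivity
  rw [euler]
  have : ∀ n : ℕ, 1 - (q ^ d) ^ (n + 1) = 1 - q ^ (d * (n + 1)) := by
    intro n; rw [← pow_mul]
  rw [tprod_congr this, PP_range hq _ he h0]
  apply PP_congr
  intro k hk0
  constructor
  · rintro ⟨n, hn⟩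
    exact ⟨n + 1, hn ▸ rfl⟩
  · rintro ⟨c, hc⟩
    have hc0 : c ≠ 0 := by rintro rfl; rw [mul_zero] at hc; exact hk0 hc
    refine ⟨c - 1, ?_⟩
    show d * (c - 1 + 1) = k
    rw [Nat.sub_add_cancel (Nat.one_le_iff_ne_zero.2 hc0)]
    exact hc.symm

lemma theta_eq (hq : ‖q‖ < 1) (hq0 : q ≠ 0) {r M : ℕ} (hr : 0 < r) (hrM : 2 * r < M) :
    thetaProd (q ^ r) (q ^ M) = PP q {k | k % M = r ∨ k % M = M - r} := by
  have hM : 0 < M := by omega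
  have hrM' : r < M := by omega
  have hle : ∀ n : ℕ, r ≤ M * (n + 1) := fun n =>
    le_trans hrM'.le (Nat.le_mul_of_pos_right M (by omega))
  have hMn : ∀ n : ℕ, M * (n + 1) = M * n + M := fun n => by ring
  have h1 : ∀ n : ℕ, (1 - q ^ r * (q ^ M) ^ n) * (1 - (q ^ r)⁻¹ * (q ^ M) ^ (n + 1))
      = (1 - q ^ (M * n + r)) * (1 - q ^ (M * (n + 1) - r)) := by
    intro n
    have t1 : q ^ r * (q ^ M) ^ n = q ^ (M * n + r) := by
      rw [← pow_mul, ← pow_add, add_comm]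
    have key : q ^ (M * (n + 1) - r) * q ^ r = q ^ (M * (n + 1)) := by
      rw [← pow_add]
      congr 1
      have := hle n
      omega
    have t2 : (q ^ r)⁻¹ * (q ^ M) ^ (n + 1) = q ^ (M * (n + 1) - r) := by
      rw [← pow_mul, ← key, mul_comm (q ^ (M * (n + 1) - r)) (q ^ r),
        inv_mul_cancel_left₀ (pow_ne_zero r hq0)]
    rw [t1, t2]
  have he1 : Function.Injective (fun n : ℕ => M * n + r) := by
    intro a b h
    simp only [add_left_inj] at h
    exact Nat.eq_of_mul_eq_mul_left hM h
  have he2 : Function.Injective (fun n : ℕ => M * (n + 1) - r) := by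
    intro a b h
    simp only at h
    have h2 : M * (a + 1) = M * (b + 1) := by
      have := hle a; have := hle b; omega
    have := Nat.eq_of_mul_eq_mul_left hM h2
    omega
  have h01 : ∀ n : ℕ, M * n + r ≠ 0 := fun n => by omega
  have h02 : ∀ n : ℕ, M * (n + 1) - r ≠ 0 := fun n => by have := hle n; have := hMn n; omega
  rw [thetaProd, tprod_congr h1,
    Multipliable.tprod_mul (multipliable_sub_pow hq _ he1 h01) (multipliable_sub_pow hq _ he2 h02),
    PP_range hq _ he1 h01, PP_range hq _ he2 h02,
    ← PP_union hq (A := Set.range fun n : ℕ => M * n + r)]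
  · apply PP_congr
    intro k hk
    constructor
    · rintro (⟨n, hn⟩ | ⟨n, hn⟩)
      · left
        simp only at hn
        subst hn
        rw [add_comm, Nat.add_mul_mod_self_left, Nat.mod_eq_of_lt hrM']
      · right
        simp only at hn
        have := hle n; have := hMn n
        have hkk : k = M * n + (M - r) := by omega
        subst hkk
        rw [add_comm, Nat.add_mul_mod_self_left, Nat.mod_eq_of_lt (by omega)]
    · have hdm := Nat.div_add_mod k M
      rintro (h | h)
      · exact Or.inl ⟨k / M, by simp only; omega⟩
      · refine Or.inr ⟨k / M, ?_⟩
        simp only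
        have := hMn (k / M)
        omega
  · rw [Set.disjoint_left]
    rintro a ⟨n, hn⟩ ⟨m, hm⟩
    simp only at hn hm
    have := hle m; have := hMn m
    have h2 : M * n + r = M * m + (M - r) := by omega
    have hmod1 : (M * n + r) % M = r := by
      rw [add_comm, Nat.add_mul_mod_self_left, Nat.mod_eq_of_lt hrM']
    have hmod2 : (M * m + (M - r)) % M = M - r := by
      rw [add_comm, Nat.add_mul_mod_self_left, Nat.mod_eq_of_lt (by omega)]
    rw [h2, hmod2] at hmod1
    omega

lemma gcd_sub' {s M : ℕ} (h : s ≤ M) : Nat.gcd (M - s) M = Nat.gcd s M := by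
  obtain ⟨a, rfl⟩ : ∃ a, M = a + s := ⟨M - s, by omega⟩
  rw [Nat.add_sub_cancel, Nat.add_comm a s, Nat.gcd_add_self_right, Nat.gcd_comm a s]
  conv_rhs => rw [Nat.add_comm, Nat.gcd_add_self_right]

lemma THETA (hq : ‖q‖ < 1) (hq0 : q ≠ 0) {M : ℕ} (hModd : Odd M) (hM1 : 1 < M) :
    ∏ r ∈ (Finset.Icc 1 ((M - 1) / 2)).filter (fun r => Nat.gcd r M = 1),
      thetaProd (q ^ r) (q ^ M) = PP q {k | Nat.gcd k M = 1} := by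
  obtain ⟨t, ht⟩ := hModd
  set R := (Finset.Icc 1 ((M - 1) / 2)).filter (fun r => Nat.gcd r M = 1) with hR
  have hmem : ∀ r ∈ R, 1 ≤ r ∧ 2 * r < M ∧ Nat.gcd r M = 1 := by
    intro r hr
    rw [hR, Finset.mem_filter, Finset.mem_Icc] at hr
    exact ⟨hr.1.1, by omega, hr.2⟩
  rw [Finset.prod_congr rfl (fun r hr =>
    theta_eq hq hq0 (by have := hmem r hr; omega) (hmem r hr).2.1)]
  rw [← PP_biUnion hq R (fun r => {k | k % M = r ∨ k % M = M - r})]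
  · apply PP_congr
    intro k hk
    simp only [Set.mem_iUnion, Set.mem_setOf_eq, exists_prop]
    have hgcdmod : Nat.gcd k M = Nat.gcd (k % M) M := by
      rw [Nat.gcd_comm k M, Nat.gcd_rec M k]
    constructor
    · rintro ⟨r, hr, h | h⟩
      · rw [hgcdmod, h]
        exact (hmem r hr).2.2
      · rw [hgcdmod, h, gcd_sub' (by have := hmem r hr; omega)]
        exact (hmem r hr).2.2
    · intro hco
      have hs : k % M < M := Nat.mod_lt k (by omega)
      have hs0 : k % M ≠ 0 := by
        intro h
        rw [hgcdmod, h, Nat.gcd_comm, Nat.gcd_zero_right] at hco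
        omega
      by_cases hlo : k % M ≤ (M - 1) / 2
      · refine ⟨k % M, ?_, Or.inl rfl⟩
        rw [hR, Finset.mem_filter, Finset.mem_Icc]
        exact ⟨⟨by omega, hlo⟩, by rw [← hgcdmod]; exact hco⟩
      · refine ⟨M - k % M, ?_, Or.inr (by omega)⟩
        rw [hR, Finset.mem_filter, Finset.mem_Icc]
        refine ⟨⟨by omega, by omega⟩, ?_⟩
        rw [gcd_sub' (by omega), ← hgcdmod]
        exact hco
  · intro i hi j hj hij
    rw [Set.disjoint_left]
    rintro a (ha | ha) (hb | hb) <;>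
      [skip; skip; skip; skip] <;>
      · rw [ha] at hb
        have h1 := hmem i hi
        have h2 := hmem j hj
        omega

lemma totient_eq_two_mul (M : ℕ) (hModd : Odd M) (hM1 : 1 < M) :
    M.totient = 2 * ((Finset.Icc 1 ((M - 1) / 2)).filter (fun r => Nat.gcd r M = 1)).card := by
  obtain ⟨t, ht⟩ := hModd
  set R := (Finset.Icc 1 ((M - 1) / 2)).filter (fun r => Nat.gcd r M = 1) with hR
  set F := (Finset.range M).filter M.Coprime with hF
  have hsplit := Finset.card_filter_add_card_filter_not
    (s := F) (p := fun m => m ≤ (M - 1) / 2)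
  have hlo : F.filter (fun m => m ≤ (M - 1) / 2) = R := by
    ext m
    simp only [hF, hR, Finset.mem_filter, Finset.mem_range, Finset.mem_Icc]
    constructor
    · rintro ⟨⟨hm, hco⟩, hle⟩
      refine ⟨⟨?_, hle⟩, by rwa [Nat.gcd_comm]⟩
      rcases Nat.eq_zero_or_pos m with h0 | h1
      · exfalso
        rw [h0] at hco
        unfold Nat.Coprime at hco
        simp at hco
        omega
      · exact h1
    · rintro ⟨⟨h1, hle⟩, hco⟩
      exact ⟨⟨by omega, by rwa [Nat.gcd_comm] at hco⟩, hle⟩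
  have hhi : (F.filter (fun m => ¬ m ≤ (M - 1) / 2)).card = R.card := by
    apply Finset.card_bij' (i := fun m _ => M - m) (j := fun r _ => M - r)
    · intro m hm
      simp only [hF, Finset.mem_filter, Finset.mem_range, not_le] at hm
      simp only [hR, Finset.mem_filter, Finset.mem_Icc]
      obtain ⟨⟨hmM, hco⟩, hgt⟩ := hm
      refine ⟨⟨by omega, by omega⟩, ?_⟩
      rw [gcd_sub' (by omega)]
      exact Nat.coprime_comm.mp hco
    · intro r hrm
      simp only [hR, Finset.mem_filter, Finset.mem_Icc] at hrm
      simp only [hF, Finset.mem_filter, Finset.mem_range, not_le]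
      obtain ⟨⟨h1, hle⟩, hco⟩ := hrm
      refine ⟨⟨by omega, ?_⟩, by omega⟩
      refine Nat.coprime_comm.mp ?_
      show Nat.gcd (M - r) M = 1
      rw [gcd_sub' (by omega)]
      exact hco
    · intro m hm
      simp only [hF, Finset.mem_filter, Finset.mem_range, not_le] at hm
      omega
    · intro r hrm
      simp only [hR, Finset.mem_filter, Finset.mem_Icc] at hrm
      omega
  rw [hlo] at hsplit
  rw [Nat.totient, ← hF]
  omega

lemma zpow_sum₀ {ι : Type*} {x : ℂ} (hx : x ≠ 0) (s : Finset ι) (n : ι → ℤ) :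
    x ^ (∑ i ∈ s, n i) = ∏ i ∈ s, x ^ n i := by
  classical
  induction s using Finset.induction with
  | empty => simp
  | insert a s' h ih =>
    rw [Finset.sum_insert h, Finset.prod_insert h, zpow_add₀ hx, ih]

lemma sum_moebius (e : ℕ) :
    ∑ d ∈ e.divisors, (ArithmeticFunction.moebius d) = if e = 1 then 1 else 0 := by
  rw [← ArithmeticFunction.coe_mul_zeta_apply, ArithmeticFunction.moebius_mul_coe_zeta,
    ArithmeticFunction.one_apply]

lemma MOEB (hq : ‖q‖ < 1) {M : ℕ} (hM : M ≠ 0) :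
    ∏ d ∈ M.divisors, euler (q ^ d) ^ (ArithmeticFunction.moebius d)
      = PP q {k | Nat.gcd k M = 1} := by
  classical
  have heuler : ∀ d ∈ M.divisors, euler (q ^ d)
      = ∏ e ∈ M.divisors.filter (d ∣ ·), PP q {k | Nat.gcd k M = e} := by
    intro d hd
    rw [Nat.mem_divisors] at hd
    have hd0 : d ≠ 0 := fun h => hM (by simpa [h] using hd.1)
    rw [euler_eq hq hd0]
    rw [← PP_biUnion hq (M.divisors.filter (d ∣ ·)) (fun e => {k | Nat.gcd k M = e})]
    · congr 1
      ext k
      simp only [Set.mem_setOf_eq, Set.mem_iUnion, Finset.mem_filter, Nat.mem_divisors,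
        exists_prop]
      constructor
      · intro hdk
        exact ⟨Nat.gcd k M, ⟨⟨Nat.gcd_dvd_right k M, hM⟩, Nat.dvd_gcd hdk hd.1⟩, rfl⟩
      · rintro ⟨e, ⟨⟨heM, _⟩, hde⟩, rfl⟩
        exact hde.trans (Nat.gcd_dvd_left k M)
    · intro i hi j hj hij
      rw [Set.disjoint_left]
      rintro a ha hb
      exact hij (ha.symm.trans hb)
  rw [Finset.prod_congr rfl (fun d hd => by rw [heuler d hd])]
  have step : ∀ d ∈ M.divisors,
      (∏ e ∈ M.divisors.filter (d ∣ ·), PP q {k | Nat.gcd k M = e}) ^ (ArithmeticFunction.moebius d)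
      = ∏ e ∈ M.divisors, (if d ∣ e then PP q {k | Nat.gcd k M = e} ^ (ArithmeticFunction.moebius d) else 1) := by
    intro d hd
    rw [← Finset.prod_zpow, Finset.prod_filter]
  rw [Finset.prod_congr rfl step, Finset.prod_comm]
  have inner : ∀ e ∈ M.divisors,
      (∏ d ∈ M.divisors, if d ∣ e then PP q {k | Nat.gcd k M = e} ^ (ArithmeticFunction.moebius d) else 1)
      = if e = 1 then PP q {k | Nat.gcd k M = e} else 1 := by
    intro e he
    rw [Nat.mem_divisors] at he
    rw [← Finset.prod_filter, show M.divisors.filter (· ∣ e) = e.divisors from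
      Nat.divisors_filter_dvd_of_dvd hM he.1]
    rw [← zpow_sum₀ (PP_ne_zero hq _), sum_moebius e]
    split <;> simp
  rw [Finset.prod_congr rfl inner, Finset.prod_ite_eq' M.divisors 1
    (fun e => PP q {k | Nat.gcd k M = e})]
  rw [if_pos (Nat.one_mem_divisors.2 hM)]

lemma PP_mul_p (hq : ‖q‖ < 1) {p M : ℕ} (hp : p ≠ 0) (hpM : Nat.Coprime p M) :
    PP (q ^ p) {k | Nat.gcd k M = 1} = PP q {k | p ∣ k ∧ Nat.gcd k M = 1} := by
  set T : Set ℕ := {k | p ∣ k ∧ Nat.gcd k M = 1} with hT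
  have hinj : Function.Injective (fun k : ℕ => p * k) := fun a b h =>
    Nat.eq_of_mul_eq_mul_left (Nat.pos_of_ne_zero hp) h
  have hsupp : Function.mulSupport (pif q T) ⊆ Set.range (fun k : ℕ => p * k) := by
    intro x hx
    by_contra hxr
    apply hx
    have hpx : ¬ p ∣ x := by
      intro ⟨c, hc⟩
      exact hxr ⟨c, hc.symm⟩
    rw [pif, if_neg (fun h => hpx h.1.1)]
  rw [PP, PP, ← hinj.tprod_eq hsupp]
  apply tprod_congr
  intro k
  unfold pif
  have hcond : ((p * k ∈ T ∧ p * k ≠ 0)) ↔ (k ∈ {k | Nat.gcd k M = 1} ∧ k ≠ 0) := by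
    simp only [hT, Set.mem_setOf_eq]
    constructor
    · rintro ⟨⟨hdvd, hgcd⟩, h0⟩
      rw [hpM.gcd_mul_left_cancel k] at hgcd
      exact ⟨hgcd, fun h => h0 (by rw [h, mul_zero])⟩
    · rintro ⟨hgcd, h0⟩
      refine ⟨⟨⟨k, rfl⟩, ?_⟩, by positivity⟩
      rwa [hpM.gcd_mul_left_cancel k]
  by_cases h : k ∈ {k : ℕ | Nat.gcd k M = 1} ∧ k ≠ 0
  · rw [if_pos (hcond.2 h), if_pos h, pow_mul]
  · rw [if_neg (fun hc => h (hcond.1 hc)), if_neg h]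

lemma euler_zero : euler (0 : ℂ) = 1 := by
  have h : ∀ n : ℕ, (1 : ℂ) - 0 ^ (n + 1) = 1 := fun n => by
    rw [zero_pow (Nat.succ_ne_zero n), sub_zero]
  rw [euler, tprod_congr h, tprod_one]

lemma thetaProd_zero : thetaProd (0 : ℂ) 0 = 1 := by
  have h : ∀ n : ℕ, ((1 : ℂ) - 0 * 0 ^ n) * (1 - (0 : ℂ)⁻¹ * 0 ^ (n + 1)) = 1 := fun n => by
    simp
  rw [thetaProd, tprod_congr h, tprod_one]

theorem bigD_product_eq_saitoS' (p M : ℕ) (hp : p.Prime) (hM : Odd M) (hM1 : 1 < M)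
    (hpM : ¬ p ∣ M) (q : ℂ) (hq : ‖q‖ < 1) :
    ∏ r ∈ (Finset.Icc 1 ((M - 1) / 2)).filter (fun r => Nat.gcd r M = 1),
        bigD p (q ^ r) (q ^ M) =
      saitoS (p * M) q := by
  classical
  have hM0 : M ≠ 0 := by omega
  have hp0 : p ≠ 0 := hp.pos.ne'
  have hpM0 : p * M ≠ 0 := by positivity
  by_cases hq0 : q = 0
  · subst hq0
    have h0p : (0 : ℂ) ^ p = 0 := zero_pow hp0
    have hbigD : ∀ r ∈ (Finset.Icc 1 ((M - 1) / 2)).filter (fun r => Nat.gcd r M = 1),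
        bigD p ((0 : ℂ) ^ r) ((0 : ℂ) ^ M) = 1 := by
      intro r hr
      rw [Finset.mem_filter, Finset.mem_Icc] at hr
      rw [zero_pow (by omega : r ≠ 0), zero_pow hM0, bigD, h0p, euler_zero, thetaProd_zero,
        one_pow, one_mul, div_one]
    rw [Finset.prod_congr rfl hbigD, Finset.prod_const_one, saitoS, zero_pow hpM0, euler_zero,
      one_pow]
    have hden : ∀ d ∈ (p * M).divisors,
        euler ((0 : ℂ) ^ d) ^ (ArithmeticFunction.moebius d) = 1 := by
      intro d hd
      rw [zero_pow (Nat.pos_of_mem_divisors hd).ne', euler_zero, one_zpow]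
    rw [Finset.prod_congr rfl hden, Finset.prod_const_one, div_one]
  · have hcop : Nat.Coprime p M := (hp.coprime_iff_not_dvd).2 hpM
    have hqp : ‖q ^ p‖ < 1 := norm_pow_lt hq hp0
    have hqp0 : q ^ p ≠ 0 := pow_ne_zero _ hq0
    have hfact : ∀ r ∈ (Finset.Icc 1 ((M - 1) / 2)).filter (fun r => Nat.gcd r M = 1),
        bigD p (q ^ r) (q ^ M) = euler ((q ^ p) ^ M) ^ (2 * p - 2)
          * thetaProd ((q ^ p) ^ r) ((q ^ p) ^ M) / thetaProd (q ^ r) (q ^ M) := by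
      intro r _
      rw [bigD, pow_right_comm q M p, pow_right_comm q r p]
    rw [Finset.prod_congr rfl hfact, Finset.prod_div_distrib, Finset.prod_mul_distrib,
      Finset.prod_const, ← pow_mul]
    rw [THETA hq hq0 hM hM1, THETA hqp hqp0 hM hM1, PP_mul_p hq hp0 hcop]
    rw [saitoS, MOEB hq hpM0]
    have hE : (q ^ p) ^ M = q ^ (p * M) := by rw [← pow_mul]
    have hexp : (2 * p - 2) * ((Finset.Icc 1 ((M - 1) / 2)).filter
        (fun r => Nat.gcd r M = 1)).card = (p * M).totient := by
      rw [Nat.totient_mul hcop, Nat.totient_prime hp, totient_eq_two_mul M hM hM1]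
      have h2 : 2 * p - 2 = 2 * (p - 1) := by omega
      rw [h2]
      ring
    have hsplitset : {k : ℕ | Nat.gcd k M = 1}
        = {k : ℕ | Nat.gcd k (p * M) = 1} ∪ {k : ℕ | p ∣ k ∧ Nat.gcd k M = 1} := by
      ext k
      simp only [Set.mem_setOf_eq, Set.mem_union]
      constructor
      · intro h
        by_cases hpk : p ∣ k
        · exact Or.inr ⟨hpk, h⟩
        · exact Or.inl (Nat.coprime_mul_iff_right.2
            ⟨Nat.coprime_comm.mp (hp.coprime_iff_not_dvd.2 hpk), h⟩)
      · rintro (h | h)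
        · exact (Nat.coprime_mul_iff_right.1 h).2
        · exact h.2
    have hdisj : Disjoint {k : ℕ | Nat.gcd k (p * M) = 1} {k : ℕ | p ∣ k ∧ Nat.gcd k M = 1} := by
      rw [Set.disjoint_left]
      rintro k hk ⟨hpk, _⟩
      have : p ∣ Nat.gcd k (p * M) := Nat.dvd_gcd hpk (Dvd.intro M rfl)
      rw [Set.mem_setOf_eq] at hk
      rw [hk] at this
      have hple : p ≤ 1 := Nat.le_of_dvd one_pos this
      have hp2 := hp.two_le
      omega
    have hPPsplit : PP q {k : ℕ | Nat.gcd k M = 1}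
        = PP q {k : ℕ | Nat.gcd k (p * M) = 1} * PP q {k : ℕ | p ∣ k ∧ Nat.gcd k M = 1} := by
      rw [hsplitset, PP_union hq hdisj]
    rw [hE, hexp, hPPsplit]
    have h1 := PP_ne_zero hq {k : ℕ | Nat.gcd k (p * M) = 1}
    have h2 := PP_ne_zero hq {k : ℕ | p ∣ k ∧ Nat.gcd k M = 1}
    field_simp

theorem bigD_product_eq_saitoS (p M : ℕ) (hp : p.Prime) (hM : Odd M) (hM1 : 1 < M)
    (hpM : ¬ p ∣ M) (q : ℂ) (hq : ‖q‖ < 1) :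
    ∏ r ∈ (Finset.Icc 1 ((M - 1) / 2)).filter (fun r => Nat.gcd r M = 1),
        bigD p (q ^ r) (q ^ M) =
      saitoS (p * M) q :=
  bigD_product_eq_saitoS' p M hp hM hM1 hpM q hq
end
end

section
/- Let p be a prime, M an odd positive integer with p ∤ M, α ≥ 2, N = p^α M and N' = pM. Then S_N(q) = ( E(q^{p^{α-1} N'})^{p^{α-1}} / E(q^{N'}) )^{(p-1)φ(M)} · S_{N'}(q), where S_N(q) := E(q^N)^{φ(N)} / ∏_{d∣N} E(q^d)^{μ(d)}. -/
/-!
STATEMENT 10 (equation (3.10) of the paper, Case 3 of the proof of Saito's conjecture):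
Let `p` be a prime, `M` an odd positive integer with `p ∤ M`, `α ≥ 2`, `N = p^α M` and
`N' = pM`.  Then
`S_N(q) = ( E(q^{p^{α-1} N'})^{p^{α-1}} / E(q^{N'}) )^{(p-1)φ(M)} · S_{N'}(q)`,
where `S_N(q) = E(q^N)^{φ(N)} / ∏_{d ∣ N} E(q^d)^{μ(d)}`.
-/

noncomputable section

lemma factor_ne_zero {w : ℂ} (hw : ‖w‖ < 1) (n : ℕ) : 1 - w ^ (n + 1) ≠ 0 := by
  have h : ‖w ^ (n + 1)‖ < 1 := by
    rw [norm_pow]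
    exact pow_lt_one₀ (norm_nonneg _) hw n.succ_ne_zero
  intro h0
  have : w ^ (n + 1) = 1 := by linear_combination -h0
  rw [this] at h; simp at h

lemma summable_log_euler {w : ℂ} (hw : ‖w‖ < 1) :
    Summable fun n : ℕ => Complex.log (1 - w ^ (n + 1)) := by
  have h0 : (0:ℝ) ≤ ‖w‖ := norm_nonneg _
  apply Summable.of_norm_bounded
    (g := fun n => ((1 - ‖w‖)⁻¹ / 2 + 1) * ‖w‖ ^ (n + 1))
  · have := (summable_geometric_of_lt_one h0 hw).mul_left (((1 - ‖w‖)⁻¹ / 2 + 1) * ‖w‖)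
    refine this.congr fun n => ?_
    ring
  · intro n
    have hzn : ‖(-(w ^ (n+1)))‖ = ‖w‖ ^ (n + 1) := by rw [norm_neg, norm_pow]
    have hle : ‖w‖ ^ (n + 1) ≤ ‖w‖ := pow_le_of_le_one h0 hw.le n.succ_ne_zero
    have hlt : ‖(-(w ^ (n+1)))‖ < 1 := by rw [hzn]; exact lt_of_le_of_lt hle hw
    have key := Complex.norm_log_one_add_le hlt
    have heq : (1 : ℂ) + -(w ^ (n+1)) = 1 - w ^ (n+1) := by ring
    rw [heq, hzn] at key
    refine key.trans ?_
    have h1 : (1 - ‖w‖) ≤ 1 - ‖w‖ ^ (n + 1) := by linarith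
    have h2 : (0:ℝ) < 1 - ‖w‖ := by linarith
    have hinv : (1 - ‖w‖ ^ (n + 1))⁻¹ ≤ (1 - ‖w‖)⁻¹ := by
      apply inv_anti₀ h2 h1
    have hsq : (‖w‖ ^ (n + 1)) ^ 2 ≤ ‖w‖ ^ (n + 1) := by
      rw [← pow_mul]
      exact pow_le_pow_of_le_one h0 hw.le (by omega)
    have hp0 : (0:ℝ) ≤ ‖w‖ ^ (n + 1) := pow_nonneg h0 _
    have hinv0 : (0:ℝ) ≤ (1 - ‖w‖)⁻¹ := by positivity
    nlinarith [sq_nonneg (‖w‖ ^ (n+1))]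

lemma euler_ne_zero {w : ℂ} (hw : ‖w‖ < 1) : euler w ≠ 0 := by
  have h := Complex.cexp_tsum_eq_tprod (f := fun n : ℕ => 1 - w ^ (n + 1))
    (fun n => factor_ne_zero hw n)
    (summable_log_euler hw)
  rw [euler, ← h]
  exact Complex.exp_ne_zero _

theorem saitoS_prime_power_reduction (p M α : ℕ) (hp : p.Prime) (hM : Odd M) (hM0 : 0 < M)
    (hpM : ¬ p ∣ M) (hα : 2 ≤ α) (q : ℂ) (hq : ‖q‖ < 1) :
    saitoS (p ^ α * M) q =
      (euler (q ^ (p ^ (α - 1) * (p * M))) ^ (p ^ (α - 1)) / euler (q ^ (p * M)))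
          ^ ((p - 1) * M.totient) *
        saitoS (p * M) q := by
  have hp1 : 1 < p := hp.one_lt
  have hN'0 : p * M ≠ 0 := by positivity
  have hN0 : p ^ α * M ≠ 0 := by positivity
  -- exponent arithmetic
  have hexp : p ^ (α - 1) * (p * M) = p ^ α * M := by
    rw [← mul_assoc, ← pow_succ, Nat.sub_add_cancel (by omega)]
  have hcop : Nat.Coprime (p ^ α) M := (hp.coprime_iff_not_dvd.mpr hpM).pow_left _
  have hcop1 : Nat.Coprime p M := hp.coprime_iff_not_dvd.mpr hpM
  have htot : (p ^ α * M).totient = p ^ (α - 1) * ((p - 1) * M.totient) := by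
    rw [Nat.totient_mul hcop, Nat.totient_prime_pow hp (by omega : 0 < α), mul_assoc]
  have htot' : (p * M).totient = (p - 1) * M.totient := by
    rw [Nat.totient_mul hcop1, Nat.totient_prime hp]
  -- the Möbius products agree
  have hsub : (p * M).divisors ⊆ (p ^ α * M).divisors := by
    apply Nat.divisors_subset_of_dvd hN0
    exact mul_dvd_mul (dvd_pow_self p (by omega)) dvd_rfl
  have hprod : (∏ d ∈ (p ^ α * M).divisors,
        euler (q ^ d) ^ (ArithmeticFunction.moebius d)) =
      ∏ d ∈ (p * M).divisors, euler (q ^ d) ^ (ArithmeticFunction.moebius d) := by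
    refine (Finset.prod_subset hsub fun d hd hd' => ?_).symm
    have hdvd : d ∣ p ^ α * M := (Nat.mem_divisors.mp hd).1
    have hd0 : d ≠ 0 := (Nat.pos_of_mem_divisors hd).ne'
    have hmu : ArithmeticFunction.moebius d = 0 := by
      by_contra hne
      have hsf : Squarefree d := ArithmeticFunction.moebius_ne_zero_iff_squarefree.mp hne
      have : d ∣ p * M := by
        rw [← Nat.factorization_le_iff_dvd hd0 hN'0]
        intro ℓ
        by_cases hℓd : ℓ ∈ d.primeFactors
        · have hℓp : ℓ.Prime := Nat.prime_of_mem_primeFactors hℓd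
          have hℓdvd : ℓ ∣ d := Nat.dvd_of_mem_primeFactors hℓd
          have h1 : d.factorization ℓ ≤ 1 :=
            (Nat.squarefree_iff_factorization_le_one hd0).mp hsf ℓ
          have hℓN : ℓ ∣ p * M := by
            rcases (hℓp.dvd_mul.mp (hℓdvd.trans hdvd)) with h | h
            · exact Dvd.dvd.mul_right (hℓp.dvd_of_dvd_pow h) M
            · exact Dvd.dvd.mul_left h p
          have : 1 ≤ (p * M).factorization ℓ := by
            rw [← hℓp.pow_dvd_iff_le_factorization hN'0, pow_one]
            exact hℓN
          omega
        · have : d.factorization ℓ = 0 := by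
            simpa [Nat.support_factorization] using
              Finsupp.notMem_support_iff.mp (by simpa [Nat.support_factorization] using hℓd)
          simp [this]
      exact hd' (Nat.mem_divisors.mpr ⟨this, hN'0⟩)
    simp [hmu]
  -- nonvanishing
  have hqpm : ‖q ^ (p * M)‖ < 1 ∨ q = 0 := by
    by_cases h0 : q = 0
    · exact Or.inr h0
    · left
      rw [norm_pow]
      exact pow_lt_one₀ (norm_nonneg _) hq (by positivity)
  have hB : euler (q ^ (p * M)) ≠ 0 := by
    rcases hqpm with h | h
    · exact euler_ne_zero h
    · have hpm : p * M ≠ 0 := hN'0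
      rw [h, zero_pow hpm]
      rw [show euler 0 = 1 by simp [euler], ]
      exact one_ne_zero
  -- final algebra
  rw [saitoS, saitoS, hprod, hexp, htot, htot']
  rw [div_pow, ← pow_mul]
  rw [div_mul_div_comm, mul_comm (euler (q ^ (p ^ α * M)) ^ (p ^ (α - 1) * ((p - 1) * M.totient)))
    (euler (q ^ (p * M)) ^ ((p - 1) * M.totient)),
    mul_div_mul_left _ _ (pow_ne_zero _ hB)]
end
end

section
/- For every integer L ≥ 0, (z₁ z₂; q)_L / ( (z₁; q)_L (z₂; q)_L ) = Σ_{j=0}^{L} [L choose j]_q · z₁^j / ( (z₁ q^{L-j}; q)_j (z₂ q^j; q)_{L-j} ), and all coefficients of the expansion of the left side as a power series in z₁, z₂ and q are nonnegative. -/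
/-!
STATEMENT 15 (Proposition 4.3 of the paper, finite analogue of Proposition 4.1):
For every `L ≥ 0`,
`(z₁z₂;q)_L / ((z₁;q)_L (z₂;q)_L)
   = ∑_{j=0}^{L} [L choose j]_q z₁^j / ((z₁ q^{L-j};q)_j (z₂ q^j;q)_{L-j})`,
where `[L choose j]_q = (q;q)_L / ((q;q)_j (q;q)_{L-j})` is the Gaussian polynomial,
and all coefficients of the expansion of the left side as a power series in `z₁`, `z₂`
and `q` are nonnegative.  The identity is stated pointwise for complex `z₁, z₂, q`
avoiding the (finitely many) zeros of the denominators; the nonnegativity is expressed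
as an absolutely convergent triple power series on `|z₁| < 1`, `|z₂| < 1`, `|q| < 1`.
-/

noncomputable section

/-- The finite q-Pochhammer symbol `(z;q)_n = ∏_{j=0}^{n-1} (1 - z q^j)`. -/
def poch (z q : ℂ) (n : ℕ) : ℂ := ∏ j ∈ Finset.range n, (1 - z * q ^ j)

def G (q : ℂ) : ℕ → ℕ → ℂ
  | 0, 0 => 1
  | 0, _ + 1 => 0
  | _ + 1, 0 => 1
  | L + 1, j + 1 => G q L (j + 1) + q ^ (L - j) * G q L j

@[simp] lemma poch_zero (z q : ℂ) : poch z q 0 = 1 := rfl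

lemma poch_succ (z q : ℂ) (n : ℕ) : poch z q (n + 1) = poch z q n * (1 - z * q ^ n) :=
  Finset.prod_range_succ _ _

lemma poch_add (z q : ℂ) (a b : ℕ) :
    poch z q (a + b) = poch z q a * poch (z * q ^ a) q b := by
  unfold poch
  rw [Finset.prod_range_add]
  congr 1
  refine Finset.prod_congr rfl fun i _ => ?_
  rw [pow_add]; ring

@[simp] lemma G_zero_zero (q : ℂ) : G q 0 0 = 1 := rfl
@[simp] lemma G_succ_zero (q : ℂ) (L : ℕ) : G q (L+1) 0 = 1 := rfl

lemma G_zero (q : ℂ) (L : ℕ) : G q L 0 = 1 := by cases L <;> rfl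

lemma G_of_lt (q : ℂ) : ∀ L j, L < j → G q L j = 0 := by
  intro L
  induction L with
  | zero => intro j hj; obtain ⟨j, rfl⟩ := Nat.exists_eq_add_of_lt hj; rfl
  | succ L ih =>
    intro j hj
    obtain ⟨j, rfl⟩ : ∃ k, j = k + 1 := ⟨j - 1, by omega⟩
    show G q L (j+1) + q ^ (L - j) * G q L j = 0
    rw [ih (j+1) (by omega), ih j (by omega)]; ring

lemma G_self (q : ℂ) : ∀ L, G q L L = 1 := by
  intro L
  induction L with
  | zero => rfl
  | succ L ih =>
    show G q L (L+1) + q ^ (L - L) * G q L L = 1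
    rw [G_of_lt q L (L+1) (by omega), ih]; simp

/-- Key polynomial identity. -/
lemma key (q z₁ z₂ : ℂ) : ∀ L : ℕ,
    poch (z₁ * z₂) q L =
      ∑ j ∈ Finset.range (L + 1), G q L j * z₁ ^ j * poch z₁ q (L - j) * poch z₂ q j := by
  intro L
  induction L with
  | zero => simp [poch]
  | succ L ih =>
    rw [poch_succ, ih]
    rw [Finset.sum_range_succ' (fun j => G q (L+1) j * z₁ ^ j * poch z₁ q (L + 1 - j) * poch z₂ q j)]
    -- RHS = ∑_{i ∈ range (L+1)} f (i+1) + f 0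
    have h0 : G q (L+1) 0 * z₁ ^ 0 * poch z₁ q (L + 1 - 0) * poch z₂ q 0 = poch z₁ q (L+1) := by
      simp
    rw [h0]
    -- expand f (i+1) = b i + c i
    have hsplit : ∀ i ∈ Finset.range (L+1),
        G q (L+1) (i+1) * z₁ ^ (i+1) * poch z₁ q (L + 1 - (i+1)) * poch z₂ q (i+1)
        = G q L (i+1) * z₁ ^ (i+1) * poch z₁ q (L - i) * poch z₂ q (i+1)
          + q ^ (L - i) * G q L i * z₁ ^ (i+1) * poch z₁ q (L - i) * poch z₂ q (i+1) := by
      intro i _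
      show (G q L (i+1) + q ^ (L - i) * G q L i) * _ * _ * _ = _
      have : L + 1 - (i + 1) = L - i := by omega
      rw [this]; ring
    rw [Finset.sum_congr rfl hsplit, Finset.sum_add_distrib]
    -- first sum + poch z₁ q (L+1) = ∑ a j * (1 - z₁ q^{L-j})
    have hfirst : poch z₁ q (L+1)
        + ∑ i ∈ Finset.range (L+1),
            G q L (i+1) * z₁ ^ (i+1) * poch z₁ q (L - i) * poch z₂ q (i+1)
        = ∑ j ∈ Finset.range (L+1),
            (G q L j * z₁ ^ j * poch z₁ q (L - j) * poch z₂ q j) * (1 - z₁ * q ^ (L - j)) := by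
      have expand : ∀ j ∈ Finset.range (L+1),
          (G q L j * z₁ ^ j * poch z₁ q (L - j) * poch z₂ q j) * (1 - z₁ * q ^ (L - j))
          = G q L j * z₁ ^ j * poch z₁ q (L + 1 - j) * poch z₂ q j := by
        intro j hj
        rw [Finset.mem_range] at hj
        have : L + 1 - j = (L - j) + 1 := by omega
        rw [this, poch_succ]; ring
      rw [Finset.sum_congr rfl expand]
      rw [show (L + 1 : ℕ) = L + 1 from rfl]
      have := Finset.sum_range_succ
        (fun j => G q L j * z₁ ^ j * poch z₁ q (L + 1 - j) * poch z₂ q j) (L + 1)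
      -- sum over range (L+2) = sum over range (L+1) + top term (= 0)
      have htop : G q L (L+1) * z₁ ^ (L+1) * poch z₁ q (L + 1 - (L+1)) * poch z₂ q (L+1) = 0 := by
        rw [G_of_lt q L (L+1) (by omega)]; ring
      have hpeel := Finset.sum_range_succ'
        (fun j => G q L j * z₁ ^ j * poch z₁ q (L + 1 - j) * poch z₂ q j) (L + 1)
      -- hpeel : ∑ range(L+2) = ∑_{i ∈ range(L+1)} f(i+1) + f 0
      have h2 : ∑ j ∈ Finset.range (L + 1 + 1),
          G q L j * z₁ ^ j * poch z₁ q (L + 1 - j) * poch z₂ q j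
          = (∑ j ∈ Finset.range (L + 1),
              G q L j * z₁ ^ j * poch z₁ q (L + 1 - j) * poch z₂ q j) := by
        rw [this, htop, add_zero]
      rw [← h2, hpeel]
      simp [G_zero]
      ring
    have hcomb : ∀ j ∈ Finset.range (L+1),
        (G q L j * z₁ ^ j * poch z₁ q (L - j) * poch z₂ q j) * (1 - z₁ * z₂ * q ^ L)
        = (G q L j * z₁ ^ j * poch z₁ q (L - j) * poch z₂ q j) * (1 - z₁ * q ^ (L - j))
          + q ^ (L - j) * G q L j * z₁ ^ (j+1) * poch z₁ q (L - j) * poch z₂ q (j+1) := by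
      intro j hj; rw [Finset.mem_range] at hj
      rw [poch_succ]
      have hq : q ^ (L - j) * q ^ j = q ^ L := by rw [← pow_add]; congr 1; omega
      linear_combination (G q L j * z₁ ^ j * poch z₁ q (L - j) * poch z₂ q j * z₁ * z₂) * hq
    calc (∑ j ∈ Finset.range (L + 1),
            G q L j * z₁ ^ j * poch z₁ q (L - j) * poch z₂ q j) * (1 - z₁ * z₂ * q ^ L)
        = ∑ j ∈ Finset.range (L + 1),
            (G q L j * z₁ ^ j * poch z₁ q (L - j) * poch z₂ q j) * (1 - z₁ * z₂ * q ^ L) := by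
          rw [Finset.sum_mul]
      _ = ∑ j ∈ Finset.range (L + 1),
            ((G q L j * z₁ ^ j * poch z₁ q (L - j) * poch z₂ q j) * (1 - z₁ * q ^ (L - j))
              + q ^ (L - j) * G q L j * z₁ ^ (j+1) * poch z₁ q (L - j) * poch z₂ q (j+1)) :=
          Finset.sum_congr rfl hcomb
      _ = _ := by
          rw [Finset.sum_add_distrib, ← hfirst]; ring

/-- `G q L j * (q;q)_j * (q;q)_{L-j} = (q;q)_L` for `j ≤ L`. -/
lemma Gprod (q : ℂ) : ∀ L j, j ≤ L →
    G q L j * (poch q q j * poch q q (L - j)) = poch q q L := by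
  intro L
  induction L with
  | zero => intro j hj; interval_cases j; simp
  | succ L ih =>
    intro j hj
    match j with
    | 0 => simp
    | s + 1 =>
      show (G q L (s+1) + q ^ (L - s) * G q L s) * _ = _
      rcases Nat.lt_or_ge s L with hs | hs
      · have ih1 := ih (s+1) (by omega)
        have ih2 := ih s (by omega)
        have e2 : L - (s + 1) = L - s - 1 := by omega
        rw [e2] at ih1
        have e5 : poch q q (L - s) = poch q q (L - s - 1) * (1 - q ^ (L - s)) := by
          rw [show L - s = (L - s - 1) + 1 by omega, poch_succ, pow_succ']; simp
        have e6 : poch q q (s + 1) = poch q q s * (1 - q ^ (s + 1)) := by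
          rw [poch_succ, ← pow_succ']
        have e8 : q ^ (L - s) * q ^ (s + 1) = q * q ^ L := by
          rw [← pow_add, ← pow_succ']; congr 1; omega
        rw [show L + 1 - (s + 1) = L - s by omega, poch_succ q q L]
        linear_combination (1 - q ^ (L - s)) * ih1 + q ^ (L - s) * (1 - q ^ (s+1)) * ih2
          + (G q L (s+1) * poch q q (s+1)) * e5
          + (q ^ (L - s) * G q L s * poch q q (L - s)) * e6 - poch q q L * e8
      · -- s = L (since s + 1 ≤ L + 1 and s ≥ L)
        have hsl : s = L := by omega
        subst hsl
        rw [G_of_lt q s (s+1) (by omega)]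
        have : s + 1 - (s + 1) = 0 := by omega
        rw [this]
        simp [G_self, poch_succ, ← pow_succ']

lemma poch_ne_zero {z q : ℂ} {n : ℕ} (h : ∀ i, i < n → z * q ^ i ≠ 1) : poch z q n ≠ 0 :=
  Finset.prod_ne_zero_iff.2 fun i hi =>
    sub_ne_zero_of_ne (Ne.symm (h i (Finset.mem_range.1 hi)))

lemma pochq_ne_zero {q : ℂ} {L : ℕ} (h3 : ∀ k, 1 ≤ k → k ≤ L → q ^ k ≠ 1) {j : ℕ}
    (hj : j ≤ L) : poch q q j ≠ 0 :=
  poch_ne_zero fun i hi => by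
    rw [← pow_succ']; exact h3 (i + 1) (by omega) (by omega)

lemma part1 (L : ℕ) (z₁ z₂ q : ℂ) (h1 : ∀ j, j < L → z₁ * q ^ j ≠ 1)
    (h2 : ∀ j, j < L → z₂ * q ^ j ≠ 1) (h3 : ∀ k, 1 ≤ k → k ≤ L → q ^ k ≠ 1) :
    poch (z₁ * z₂) q L / (poch z₁ q L * poch z₂ q L) =
      ∑ j ∈ Finset.range (L + 1),
        (poch q q L / (poch q q j * poch q q (L - j))) * z₁ ^ j /
          (poch (z₁ * q ^ (L - j)) q j * poch (z₂ * q ^ j) q (L - j)) := by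
  rw [key q z₁ z₂ L, Finset.sum_div]
  apply Finset.sum_congr rfl
  intro j hj
  rw [Finset.mem_range] at hj
  have hjL : j ≤ L := by omega
  have split1 : poch z₁ q L = poch z₁ q (L - j) * poch (z₁ * q ^ (L - j)) q j := by
    conv_lhs => rw [show L = (L - j) + j by omega, poch_add]
  have split2 : poch z₂ q L = poch z₂ q j * poch (z₂ * q ^ j) q (L - j) := by
    conv_lhs => rw [show L = j + (L - j) by omega, poch_add]
  have hA : poch z₁ q (L - j) ≠ 0 := poch_ne_zero fun i hi => h1 i (by omega)
  have hB : poch (z₁ * q ^ (L - j)) q j ≠ 0 := by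
    apply poch_ne_zero; intro i hi
    rw [mul_assoc, ← pow_add]; exact h1 (L - j + i) (by omega)
  have hC : poch z₂ q j ≠ 0 := poch_ne_zero fun i hi => h2 i (by omega)
  have hD : poch (z₂ * q ^ j) q (L - j) ≠ 0 := by
    apply poch_ne_zero; intro i hi
    rw [mul_assoc, ← pow_add]; exact h2 (j + i) (by omega)
  have hgauss : poch q q L / (poch q q j * poch q q (L - j)) = G q L j := by
    rw [← Gprod q L j hjL]
    exact mul_div_cancel_right₀ _
      (mul_ne_zero (pochq_ne_zero h3 hjL) (pochq_ne_zero h3 (Nat.sub_le _ _)))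
  rw [hgauss, split1, split2]
  field_simp

/-! ### Part 2: power series with nonnegative coefficients -/

/-- A function of three complex variables that is the sum of a triple power
series with nonnegative real coefficients on the open unit polydisc. -/
def Good (f : ℂ → ℂ → ℂ → ℂ) : Prop :=
  ∃ c : ℕ × ℕ × ℕ → ℝ, (∀ x, 0 ≤ c x) ∧
    ∀ z₁ z₂ q : ℂ, ‖z₁‖ < 1 → ‖z₂‖ < 1 → ‖q‖ < 1 →
      HasSum (fun x : ℕ × ℕ × ℕ => (c x : ℂ) * z₁ ^ x.1 * z₂ ^ x.2.1 * q ^ x.2.2)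
        (f z₁ z₂ q)

lemma good_congr {f g : ℂ → ℂ → ℂ → ℂ}
    (h : ∀ z₁ z₂ q : ℂ, ‖z₁‖ < 1 → ‖z₂‖ < 1 → ‖q‖ < 1 → f z₁ z₂ q = g z₁ z₂ q)
    (hf : Good f) : Good g := by
  obtain ⟨c, hc, hs⟩ := hf
  exact ⟨c, hc, fun z₁ z₂ q h1 h2 h3 => h z₁ z₂ q h1 h2 h3 ▸ hs z₁ z₂ q h1 h2 h3⟩

lemma good_monomial {r : ℝ} (hr : 0 ≤ r) (a b d : ℕ) :
    Good (fun z₁ z₂ q => (r : ℂ) * z₁ ^ a * z₂ ^ b * q ^ d) := by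
  classical
  refine ⟨fun x => if x = (a, b, d) then r else 0,
    fun x => by by_cases hx : x = (a,b,d) <;> simp [hx, hr], fun z₁ z₂ q h1 h2 h3 => ?_⟩
  have h := hasSum_ite_eq (a, b, d) ((r : ℂ) * z₁ ^ a * z₂ ^ b * q ^ d)
  convert h using 1
  funext x
  by_cases hx : x = (a, b, d)
  · subst hx; simp
  · simp [hx]

lemma good_add {f g : ℂ → ℂ → ℂ → ℂ} (hf : Good f) (hg : Good g) :
    Good (fun z₁ z₂ q => f z₁ z₂ q + g z₁ z₂ q) := by
  obtain ⟨c, hc, hs⟩ := hf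
  obtain ⟨d, hd, ht⟩ := hg
  refine ⟨fun x => c x + d x, fun x => add_nonneg (hc x) (hd x), fun z₁ z₂ q h1 h2 h3 => ?_⟩
  have H := (hs z₁ z₂ q h1 h2 h3).add (ht z₁ z₂ q h1 h2 h3)
  convert H using 1
  funext x
  push_cast
  ring

lemma good_sum {ι : Type*} (s : Finset ι) (F : ι → ℂ → ℂ → ℂ → ℂ)
    (h : ∀ i ∈ s, Good (F i)) :
    Good (fun z₁ z₂ q => ∑ i ∈ s, F i z₁ z₂ q) := by
  classical
  induction s using Finset.induction_on with
  | empty =>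
    refine good_congr (f := fun z₁ z₂ q => ((0 : ℝ) : ℂ) * z₁ ^ 0 * z₂ ^ 0 * q ^ 0)
      (fun z₁ z₂ q _ _ _ => by simp) (good_monomial le_rfl 0 0 0)
  | @insert a s' hx ih =>
    refine good_congr (f := fun z₁ z₂ q => F a z₁ z₂ q + ∑ i ∈ s', F i z₁ z₂ q)
      (fun z₁ z₂ q _ _ _ => by simp [Finset.sum_insert hx])
      (good_add (h a (Finset.mem_insert_self a s'))
        (ih fun i hi => h i (Finset.mem_insert_of_mem hi)))

lemma summable_norm_aux {f : ℂ → ℂ → ℂ → ℂ} {c : ℕ × ℕ × ℕ → ℝ} (hc : ∀ x, 0 ≤ c x)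
    (hs : ∀ z₁ z₂ q : ℂ, ‖z₁‖ < 1 → ‖z₂‖ < 1 → ‖q‖ < 1 →
      HasSum (fun x : ℕ × ℕ × ℕ => (c x : ℂ) * z₁ ^ x.1 * z₂ ^ x.2.1 * q ^ x.2.2) (f z₁ z₂ q))
    {z₁ z₂ q : ℂ} (h1 : ‖z₁‖ < 1) (h2 : ‖z₂‖ < 1) (h3 : ‖q‖ < 1) :
    Summable (fun x : ℕ × ℕ × ℕ => ‖(c x : ℂ) * z₁ ^ x.1 * z₂ ^ x.2.1 * q ^ x.2.2‖) := by
  have h := (hs ((‖z₁‖ : ℝ) : ℂ) ((‖z₂‖ : ℝ) : ℂ) ((‖q‖ : ℝ) : ℂ)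
    (by rw [Complex.norm_real, norm_norm]; exact h1)
    (by rw [Complex.norm_real, norm_norm]; exact h2)
    (by rw [Complex.norm_real, norm_norm]; exact h3)).summable
  have h' := summable_norm_iff.2 h
  refine h'.congr fun x => ?_
  simp [norm_mul, norm_pow, Complex.norm_real, abs_of_nonneg (hc x)]

/-- The antidiagonal of `ℕ × ℕ × ℕ` as a finset. -/
def A3 (n : ℕ × ℕ × ℕ) : Finset ((ℕ × ℕ × ℕ) × (ℕ × ℕ × ℕ)) :=
  ((Finset.range (n.1 + 1) ×ˢ Finset.range (n.2.1 + 1) ×ˢ Finset.range (n.2.2 + 1)) ×ˢ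
    (Finset.range (n.1 + 1) ×ˢ Finset.range (n.2.1 + 1) ×ˢ Finset.range (n.2.2 + 1))).filter
    fun p => p.1 + p.2 = n

lemma mem_A3 {n : ℕ × ℕ × ℕ} {p : (ℕ × ℕ × ℕ) × (ℕ × ℕ × ℕ)} :
    p ∈ A3 n ↔ p.1 + p.2 = n := by
  obtain ⟨⟨a1, b1, c1⟩, ⟨a2, b2, c2⟩⟩ := p
  obtain ⟨na, nb, nc⟩ := n
  simp only [A3, Finset.mem_filter, Finset.mem_product, Finset.mem_range, Prod.mk_add_mk,
    Prod.mk.injEq]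
  omega


set_option maxHeartbeats 1000000 in
lemma good_mul {f g : ℂ → ℂ → ℂ → ℂ} (hf : Good f) (hg : Good g) :
    Good (fun z₁ z₂ q => f z₁ z₂ q * g z₁ z₂ q) := by
  obtain ⟨c, hc, hs⟩ := hf
  obtain ⟨d, hd, ht⟩ := hg
  refine ⟨fun n => ∑ p ∈ A3 n, c p.1 * d p.2,
    fun n => Finset.sum_nonneg fun p _ => mul_nonneg (hc _) (hd _),
    fun z₁ z₂ q h1 h2 h3 => ?_⟩
  have Hf := hs z₁ z₂ q h1 h2 h3
  have Hg := ht z₁ z₂ q h1 h2 h3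
  have S1 := summable_norm_aux hc hs h1 h2 h3
  have S2 := summable_norm_aux hd ht h1 h2 h3
  have S3 := summable_mul_of_summable_norm S1 S2
  have Hmul := Hf.mul Hg S3
  have Hfib := Hmul.tsum_fiberwise (fun p => p.1 + p.2)
  convert Hfib using 1
  · rfl
  funext n
  have hset : ((fun p : (ℕ × ℕ × ℕ) × (ℕ × ℕ × ℕ) => p.1 + p.2) ⁻¹' {n}) = ↑(A3 n) := by
    ext p; simp [mem_A3]
  rw [hset]
  rw [Finset.tsum_subtype' (A3 n) (fun p : (ℕ × ℕ × ℕ) × (ℕ × ℕ × ℕ) =>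
    ((c p.1 : ℂ) * z₁ ^ p.1.1 * z₂ ^ p.1.2.1 * q ^ p.1.2.2) *
      ((d p.2 : ℂ) * z₁ ^ p.2.1 * z₂ ^ p.2.2.1 * q ^ p.2.2.2))]
  have hterm : ∀ p ∈ A3 n,
      ((c p.1 : ℂ) * z₁ ^ p.1.1 * z₂ ^ p.1.2.1 * q ^ p.1.2.2) *
        ((d p.2 : ℂ) * z₁ ^ p.2.1 * z₂ ^ p.2.2.1 * q ^ p.2.2.2)
      = ((c p.1 * d p.2 : ℝ) : ℂ) * z₁ ^ n.1 * z₂ ^ n.2.1 * q ^ n.2.2 := by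
    intro p hp
    rw [mem_A3] at hp
    have e1 : n.1 = p.1.1 + p.2.1 := by rw [← hp]; rfl
    have e2 : n.2.1 = p.1.2.1 + p.2.2.1 := by rw [← hp]; rfl
    have e3 : n.2.2 = p.1.2.2 + p.2.2.2 := by rw [← hp]; rfl
    rw [e1, e2, e3, pow_add, pow_add, pow_add]
    push_cast
    ring
  rw [Finset.sum_congr rfl hterm]
  push_cast
  rw [← Finset.sum_mul, ← Finset.sum_mul, ← Finset.sum_mul]

lemma good_geom1 (a : ℕ) : Good (fun z₁ z₂ q => (1 - z₁ * q ^ a)⁻¹) := by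
  classical
  refine ⟨fun x => if x.2.1 = 0 ∧ x.2.2 = a * x.1 then 1 else 0,
    fun x => by dsimp only; split <;> norm_num, fun z₁ z₂ q h1 h2 h3 => ?_⟩
  have hn : ‖z₁ * q ^ a‖ < 1 := by
    rw [norm_mul, norm_pow]
    calc ‖z₁‖ * ‖q‖ ^ a ≤ ‖z₁‖ * 1 :=
          mul_le_mul_of_nonneg_left (pow_le_one₀ (norm_nonneg _) h3.le) (norm_nonneg _)
      _ = ‖z₁‖ := mul_one _
      _ < 1 := h1
  have hgeo := hasSum_geometric_of_norm_lt_one hn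
  have hinj : Function.Injective (fun n : ℕ => ((n, 0, a * n) : ℕ × ℕ × ℕ)) := by
    intro m n h
    exact (Prod.ext_iff.1 h).1
  refine (hinj.hasSum_iff ?_).1 ?_
  · intro x hx
    have hcond : ¬(x.2.1 = 0 ∧ x.2.2 = a * x.1) := by
      rintro ⟨u, v⟩
      exact hx ⟨x.1, by obtain ⟨i, j, k⟩ := x; simp_all⟩
    simp [hcond]
  · have heq : (fun n : ℕ => (z₁ * q ^ a) ^ n)
        = (fun x : ℕ × ℕ × ℕ =>
            ((if x.2.1 = 0 ∧ x.2.2 = a * x.1 then (1:ℝ) else 0 : ℝ) : ℂ) *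
              z₁ ^ x.1 * z₂ ^ x.2.1 * q ^ x.2.2) ∘ (fun n : ℕ => ((n, 0, a * n) : ℕ × ℕ × ℕ)) := by
      funext n
      simp [Function.comp, mul_pow, pow_mul]
    exact heq ▸ hgeo

lemma good_geom2 (a : ℕ) : Good (fun z₁ z₂ q => (1 - z₂ * q ^ a)⁻¹) := by
  classical
  refine ⟨fun x => if x.1 = 0 ∧ x.2.2 = a * x.2.1 then 1 else 0,
    fun x => by dsimp only; split <;> norm_num, fun z₁ z₂ q h1 h2 h3 => ?_⟩
  have hn : ‖z₂ * q ^ a‖ < 1 := by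
    rw [norm_mul, norm_pow]
    calc ‖z₂‖ * ‖q‖ ^ a ≤ ‖z₂‖ * 1 :=
          mul_le_mul_of_nonneg_left (pow_le_one₀ (norm_nonneg _) h3.le) (norm_nonneg _)
      _ = ‖z₂‖ := mul_one _
      _ < 1 := h2
  have hgeo := hasSum_geometric_of_norm_lt_one hn
  have hinj : Function.Injective (fun n : ℕ => ((0, n, a * n) : ℕ × ℕ × ℕ)) := by
    intro m n h
    exact ((Prod.ext_iff.1 (Prod.ext_iff.1 h).2).1 : m = n)
  refine (hinj.hasSum_iff ?_).1 ?_
  · intro x hx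
    have hcond : ¬(x.1 = 0 ∧ x.2.2 = a * x.2.1) := by
      rintro ⟨u, v⟩
      exact hx ⟨x.2.1, by obtain ⟨i, j, k⟩ := x; simp_all⟩
    simp [hcond]
  · have heq : (fun n : ℕ => (z₂ * q ^ a) ^ n)
        = (fun x : ℕ × ℕ × ℕ =>
            ((if x.1 = 0 ∧ x.2.2 = a * x.2.1 then (1:ℝ) else 0 : ℝ) : ℂ) *
              z₁ ^ x.1 * z₂ ^ x.2.1 * q ^ x.2.2) ∘ (fun n : ℕ => ((0, n, a * n) : ℕ × ℕ × ℕ)) := by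
      funext n
      simp [Function.comp, mul_pow, pow_mul]
    exact heq ▸ hgeo

lemma good_const {r : ℝ} (hr : 0 ≤ r) : Good (fun _ _ _ => (r : ℂ)) :=
  good_congr (fun z₁ z₂ q _ _ _ => by simp) (good_monomial hr 0 0 0)

lemma good_qpow (d : ℕ) : Good (fun _ _ q => q ^ d) :=
  good_congr (fun z₁ z₂ q _ _ _ => by simp) (good_monomial zero_le_one 0 0 d)

lemma good_z1pow (a : ℕ) : Good (fun z₁ _ _ => z₁ ^ a) :=
  good_congr (fun z₁ z₂ q _ _ _ => by simp) (good_monomial zero_le_one a 0 0)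

lemma good_G (L j : ℕ) : Good (fun _ _ q => G q L j) := by
  induction L generalizing j with
  | zero =>
    match j with
    | 0 => exact good_congr (fun z₁ z₂ q _ _ _ => rfl) (good_const zero_le_one)
    | j + 1 => exact good_congr (fun z₁ z₂ q _ _ _ => rfl) (good_const le_rfl)
  | succ L ih =>
    match j with
    | 0 => exact good_congr (fun z₁ z₂ q _ _ _ => rfl) (good_const zero_le_one)
    | j + 1 =>
      exact good_congr (fun z₁ z₂ q _ _ _ => rfl)
        (good_add (ih (j + 1)) (good_mul (good_qpow (L - j)) (ih j)))

lemma good_pochinv1 (a : ℕ) : ∀ m : ℕ, Good (fun z₁ z₂ q => (poch (z₁ * q ^ a) q m)⁻¹) := by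
  intro m
  induction m with
  | zero =>
    exact good_congr (fun z₁ z₂ q _ _ _ => by simp) (good_const zero_le_one)
  | succ m ih =>
    refine good_congr (f := fun z₁ z₂ q =>
      (poch (z₁ * q ^ a) q m)⁻¹ * (1 - z₁ * q ^ (a + m))⁻¹) ?_ (good_mul ih (good_geom1 (a + m)))
    intro z₁ z₂ q _ _ _
    rw [poch_succ, mul_inv, mul_assoc, ← pow_add]

lemma good_pochinv2 (a : ℕ) : ∀ m : ℕ, Good (fun z₁ z₂ q => (poch (z₂ * q ^ a) q m)⁻¹) := by
  intro m
  induction m with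
  | zero =>
    exact good_congr (fun z₁ z₂ q _ _ _ => by simp) (good_const zero_le_one)
  | succ m ih =>
    refine good_congr (f := fun z₁ z₂ q =>
      (poch (z₂ * q ^ a) q m)⁻¹ * (1 - z₂ * q ^ (a + m))⁻¹) ?_ (good_mul ih (good_geom2 (a + m)))
    intro z₁ z₂ q _ _ _
    rw [poch_succ, mul_inv, mul_assoc, ← pow_add]

lemma ne_one_of_norms {z q : ℂ} (hz : ‖z‖ < 1) (hq : ‖q‖ < 1) (j : ℕ) : z * q ^ j ≠ 1 := by
  intro h
  have : ‖z * q ^ j‖ < 1 := by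
    rw [norm_mul, norm_pow]
    calc ‖z‖ * ‖q‖ ^ j ≤ ‖z‖ * 1 :=
          mul_le_mul_of_nonneg_left (pow_le_one₀ (norm_nonneg _) hq.le) (norm_nonneg _)
      _ = ‖z‖ := mul_one _
      _ < 1 := hz
  rw [h, norm_one] at this
  exact lt_irrefl 1 this

lemma pow_ne_one_of_norm {q : ℂ} (hq : ‖q‖ < 1) {k : ℕ} (hk : 1 ≤ k) : q ^ k ≠ 1 := by
  intro h
  have : ‖q ^ k‖ < 1 := by
    rw [norm_pow]
    exact pow_lt_one₀ (norm_nonneg _) hq (by omega)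
  rw [h, norm_one] at this
  exact lt_irrefl 1 this

lemma gauss_eq {L j : ℕ} (q : ℂ) (h3 : ∀ k, 1 ≤ k → k ≤ L → q ^ k ≠ 1) (hj : j ≤ L) :
    poch q q L / (poch q q j * poch q q (L - j)) = G q L j := by
  rw [← Gprod q L j hj]
  exact mul_div_cancel_right₀ _
    (mul_ne_zero (pochq_ne_zero h3 hj) (pochq_ne_zero h3 (Nat.sub_le _ _)))

lemma good_f (L : ℕ) :
    Good (fun z₁ z₂ q => poch (z₁ * z₂) q L / (poch z₁ q L * poch z₂ q L)) := by
  refine good_congr (f := fun z₁ z₂ q => ∑ j ∈ Finset.range (L + 1),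
      G q L j * z₁ ^ j * (poch (z₁ * q ^ (L - j)) q j)⁻¹ * (poch (z₂ * q ^ j) q (L - j))⁻¹)
    ?_ ?_
  · intro z₁ z₂ q h1 h2 h3
    have H1 : ∀ j, j < L → z₁ * q ^ j ≠ 1 := fun j _ => ne_one_of_norms h1 h3 j
    have H2 : ∀ j, j < L → z₂ * q ^ j ≠ 1 := fun j _ => ne_one_of_norms h2 h3 j
    have H3 : ∀ k, 1 ≤ k → k ≤ L → q ^ k ≠ 1 := fun k hk _ => pow_ne_one_of_norm h3 hk
    rw [part1 L z₁ z₂ q H1 H2 H3]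
    refine (Finset.sum_congr rfl fun j hj => ?_).symm
    rw [Finset.mem_range] at hj
    rw [gauss_eq q H3 (by omega), div_eq_mul_inv, mul_inv]
    ring
  · refine good_sum _ _ fun j _ => ?_
    exact good_mul (good_mul (good_mul (good_G L j) (good_z1pow j))
      (good_pochinv1 (L - j) j)) (good_pochinv2 j (L - j))

theorem finite_q_binomial_nonneg (L : ℕ) :
    (∀ z₁ z₂ q : ℂ, (∀ j, j < L → z₁ * q ^ j ≠ 1) → (∀ j, j < L → z₂ * q ^ j ≠ 1) →
      (∀ k, 1 ≤ k → k ≤ L → q ^ k ≠ 1) →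
      poch (z₁ * z₂) q L / (poch z₁ q L * poch z₂ q L) =
        ∑ j ∈ Finset.range (L + 1),
          (poch q q L / (poch q q j * poch q q (L - j))) * z₁ ^ j /
            (poch (z₁ * q ^ (L - j)) q j * poch (z₂ * q ^ j) q (L - j))) ∧
    ∃ c : ℕ → ℕ → ℕ → ℝ, (∀ i j k, 0 ≤ c i j k) ∧
      ∀ z₁ z₂ q : ℂ, ‖z₁‖ < 1 → ‖z₂‖ < 1 → ‖q‖ < 1 →
        HasSum (fun x : ℕ × ℕ × ℕ => (c x.1 x.2.1 x.2.2 : ℂ) * z₁ ^ x.1 * z₂ ^ x.2.1 * q ^ x.2.2)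
          (poch (z₁ * z₂) q L / (poch z₁ q L * poch z₂ q L)) := by
  constructor
  · exact part1 L
  · obtain ⟨c, hc, hs⟩ := good_f L
    exact ⟨fun i j k => c (i, j, k), fun i j k => hc _, fun z₁ z₂ q h1 h2 h3 =>
      hs z₁ z₂ q h1 h2 h3⟩
end
end
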